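/- arXiv:1504.08026 — 4 statements merged into one kernel-verified Lean document; each statement's English description precedes it below -/
import Mathlib

section
/- A group G is supramenable if and only if G contains no paradoxical subset. -/
open scoped ENNReal

/-- A left-invariant, finitely additive measure on all subsets of `G`, with values
in `[0,∞]`. -/
def IsLeftInvariantFAM (G : Type*) [Group G] (μ : Set G → ℝ≥0∞) : Prop :=
  μ ∅ = 0 ∧ (∀ E F : Set G, Disjoint E F → μ (E ∪ F) = μ E + μ F) ∧
    ∀ (g : G) (E : Set G), μ ((g * ·) '' E) = μ E

/-- A group is supramenable if every nonempty subset carries a left-invariant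
finitely additive measure giving it measure `1`. -/
def Supramenable (G : Type*) [Group G] : Prop :=
  ∀ A : Set G, A.Nonempty →
    ∃ μ : Set G → ℝ≥0∞, IsLeftInvariantFAM G μ ∧ μ A = 1

/-- A nonempty subset `A` of `G` is paradoxical: there are disjoint subsets `B, C ⊆ A`,
finite partitions `B = ⊔ Bᵢ`, `C = ⊔ Cⱼ` and elements `sᵢ, tⱼ ∈ G` with
`A = ⊔ sᵢBᵢ = ⊔ tⱼCⱼ`. -/
def Paradoxical {G : Type*} [Group G] (A : Set G) : Prop :=
  A.Nonempty ∧ ∃ (n m : ℕ) (B : Fin n → Set G) (C : Fin m → Set G)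
    (s : Fin n → G) (t : Fin m → G),
    (∀ i, B i ⊆ A) ∧ (∀ j, C j ⊆ A) ∧
    (∀ i i', i ≠ i' → Disjoint (B i) (B i')) ∧
    (∀ j j', j ≠ j' → Disjoint (C j) (C j')) ∧
    Disjoint (⋃ i, B i) (⋃ j, C j) ∧
    (⋃ i, (s i * ·) '' B i) = A ∧
    (∀ i i', i ≠ i' → Disjoint ((s i * ·) '' B i) ((s i' * ·) '' B i')) ∧
    (⋃ j, (t j * ·) '' C j) = A ∧
    (∀ j j', j ≠ j' → Disjoint ((t j * ·) '' C j) ((t j' * ·) '' C j'))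

/-!
A left-invariant finitely additive measure with `μ A = 1` would give a paradoxical `A` measure
at least `μ A + μ A`. Conversely (Tarski), let `A` be nonempty and not paradoxical. In `G × ℕ`,
where each level carries a copy of a subset of `G`, preorder sets by embeddings that are
piecewise left translations with finitely many pieces. By Hall's marriage theorem, `2 * n` copies
of `A` embedding into `n` copies would give two copies inside one, i.e. a paradoxical
decomposition. In the free abelian group on sets bounded by finitely many copies of `A`, call
`∑ P - ∑ N` positive when the copies listed in `N` embed into those listed in `P`. This cone
contains `[V] - [U]` whenever `U` embeds into `V` and `±([U ∪ V] - [U] - [V])` for disjoint `U`,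
`V`; the class of `A` is an order unit, and by the above its negative is not positive. A
Hahn–Banach type extension gives an additive state `f`, nonnegative on the cone and equal to `1`
on `A`, and `μ E = f [E × {0}]` (`∞` for unbounded `E`) is the required measure.
-/

open Set Function
open scoped Pointwise

namespace IsLeftInvariantFAM

variable {G : Type*} [Group G] {μ : Set G → ℝ≥0∞}

theorem mono (hμ : IsLeftInvariantFAM G μ) {E F : Set G} (h : E ⊆ F) : μ E ≤ μ F := by
  rw [← union_sdiff_cancel h, hμ.2.1 _ _ disjoint_sdiff_right]
  exact le_self_add

theorem measure_iUnion {ι : Type*} [Fintype ι] (hμ : IsLeftInvariantFAM G μ) {T : ι → Set G}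
    (hT : Pairwise (Disjoint on T)) : μ (⋃ i, T i) = ∑ i, μ (T i) := by
  classical
  suffices ∀ s : Finset ι, μ (⋃ i ∈ s, T i) = ∑ i ∈ s, μ (T i) by simpa using this Finset.univ
  intro s
  induction s using Finset.induction_on with
  | empty => simpa using hμ.1
  | insert i s hi ih =>
    rw [Finset.set_biUnion_insert, hμ.2.1 _ _ (disjoint_iUnion₂_right.mpr fun j hj =>
      hT (ne_of_mem_of_not_mem hj hi).symm), ih, Finset.sum_insert hi]

theorem measure_iUnion_translate {n : ℕ} (hμ : IsLeftInvariantFAM G μ) {B : Fin n → Set G}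
    {s : Fin n → G} (hB : Pairwise (Disjoint on B))
    (hsB : Pairwise (Disjoint on fun i => (s i * ·) '' B i)) :
    μ (⋃ i, (s i * ·) '' B i) = μ (⋃ i, B i) := by
  simp only [hμ.measure_iUnion hB, hμ.measure_iUnion hsB, hμ.2.2]

theorem not_paradoxical (hμ : IsLeftInvariantFAM G μ) {A : Set G} (hA : μ A = 1) :
    ¬ Paradoxical A := by
  rintro ⟨-, n, m, B, C, s, t, hBA, hCA, hBd, hCd, hBC, hsB, hsBd, htC, htCd⟩
  have hle := hμ.mono (union_subset (iUnion_subset hBA) (iUnion_subset hCA))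
  rw [hμ.2.1 _ _ hBC, ← hμ.measure_iUnion_translate hBd hsBd,
    ← hμ.measure_iUnion_translate hCd htCd, hsB, htC, hA] at hle
  norm_num at hle

end IsLeftInvariantFAM

namespace Tarski

section State

variable {Γ : Type*} [AddCommGroup Γ] {C : AddSubmonoid Γ}

variable (C) in
/-- The graph of a partially defined additive map `Γ → ℝ`, nonnegative on `C`; it is automatically
functional since `0 ∈ C`. -/
def IsPositiveGraph (R : AddSubgroup (Γ × ℝ)) : Prop := ∀ p ∈ R, p.1 ∈ C → 0 ≤ p.2

theorem IsPositiveGraph.eq_of_mem {R : AddSubgroup (Γ × ℝ)} (hR : IsPositiveGraph C R) {x : Γ}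
    {r r' : ℝ} (h : (x, r) ∈ R) (h' : (x, r') ∈ R) : r = r' := by
  have h₀ : ((0 : Γ), r - r') ∈ R := by simpa using sub_mem h h'
  have h₀' : ((0 : Γ), r' - r) ∈ R := by simpa using sub_mem h' h
  linarith [hR _ h₀ C.zero_mem, hR _ h₀' C.zero_mem]

theorem nonneg_of_zsmul_mem {u : Γ} (hu : u ∈ C) (hu' : -u ∉ C) {j : ℤ} (hj : j • u ∈ C) :
    0 ≤ j := by
  obtain ⟨n, rfl | rfl⟩ := Int.eq_nat_or_neg j
  · exact Int.natCast_nonneg n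
  · rcases n with _ | m
    · rfl
    · refine absurd ?_ hu'
      have h := C.add_mem hj (C.nsmul_mem hu m)
      rwa [neg_smul, natCast_zsmul, succ_nsmul, neg_add, neg_add_cancel_comm] at h

theorem IsPositiveGraph.div_le_div {R : AddSubgroup (Γ × ℝ)} (hR : IsPositiveGraph C R) {x h h' : Γ}
    {r r' : ℝ} {n n' : ℕ} (hn : 0 < n) (hn' : 0 < n') (hr : (h, r) ∈ R) (hr' : (h', r') ∈ R)
    (hx : n • x - h ∈ C) (hx' : h' - n' • x ∈ C) : r / n ≤ r' / n' := by
  have hmem : n • (h', r') - n' • (h, r) ∈ R := sub_mem (nsmul_mem hr' n) (nsmul_mem hr n')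
  have hC : n • h' - n' • h ∈ C := by
    have e : n • h' - n' • h = n • (h' - n' • x) + n' • (n • x - h) := by
      simp only [nsmul_sub, smul_smul, mul_comm n n']
      abel
    exact e ▸ C.add_mem (C.nsmul_mem hx' n) (C.nsmul_mem hx n')
  have := hR _ hmem (by simpa using hC)
  simp only [Prod.snd_sub, Prod.smul_snd, nsmul_eq_mul, sub_nonneg] at this
  rw [div_le_div_iff₀ (Nat.cast_pos.mpr hn) (Nat.cast_pos.mpr hn')]
  linarith

/-- The extension step of the Hahn–Banach argument: the new value at `x` is squeezed between
the lower bounds `r / n` (with `h ≤ n • x`) and the upper bounds `r' / n'` (with `n' • x ≤ h'`). -/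
theorem IsPositiveGraph.exists_sup_zmultiples {R : AddSubgroup (Γ × ℝ)} (hR : IsPositiveGraph C R)
    {u : Γ} (hu : (u, 1) ∈ R) (hunit : ∀ x, ∃ n : ℕ, n • u - x ∈ C) (x : Γ) :
    ∃ c : ℝ, IsPositiveGraph C (R ⊔ AddSubgroup.zmultiples (x, c)) := by
  let L : Set ℝ := {d | ∃ (h : Γ) (r : ℝ) (n : ℕ), 0 < n ∧ (h, r) ∈ R ∧ n • x - h ∈ C ∧ d = r / n}
  have hku : ∀ k : ℕ, (k • u, (k : ℝ)) ∈ R := fun k => by simpa using nsmul_mem hu k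
  have hL : ∀ {h' : Γ} {r' : ℝ} {n' : ℕ}, 0 < n' → (h', r') ∈ R → h' - n' • x ∈ C →
      ∀ d ∈ L, d ≤ r' / n' := by
    rintro h' r' n' hn' hr' hx' _ ⟨h, r, n, hn, hr, hx, rfl⟩
    exact hR.div_le_div hn hn' hr hr' hx hx'
  have hLne : L.Nonempty := by
    obtain ⟨k, hk⟩ := hunit (-x)
    exact ⟨_, -(k • u), -k, 1, one_pos, by simpa using neg_mem (hku k),
      by simpa [add_comm] using hk, rfl⟩
  have hLbdd : BddAbove L := by
    obtain ⟨k, hk⟩ := hunit x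
    exact ⟨_, hL one_pos (hku k) (by simpa using hk)⟩
  refine ⟨sSup L, ?_⟩
  rintro _ hp hpC
  obtain ⟨⟨h, r⟩, hr, _, ⟨j, rfl⟩, rfl⟩ := AddSubgroup.mem_sup.mp hp
  simp only [Prod.fst_add, Prod.snd_add, Prod.smul_fst, Prod.smul_snd, zsmul_eq_mul] at hpC ⊢
  obtain ⟨n, rfl | rfl⟩ := Int.eq_nat_or_neg j
  all_goals
    obtain rfl | hn := Nat.eq_zero_or_pos n
    · simpa using hR _ hr (by simpa using hpC)
    have hn' : (0 : ℝ) < n := Nat.cast_pos.mpr hn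
    push_cast
  · rw [natCast_zsmul] at hpC
    have hmem : -r / n ∈ L := ⟨-h, -r, n, hn, neg_mem hr, by rwa [sub_neg_eq_add, add_comm], rfl⟩
    have := le_csSup hLbdd hmem
    rw [div_le_iff₀ hn'] at this
    linarith
  · rw [neg_smul, natCast_zsmul, ← sub_eq_add_neg] at hpC
    have := csSup_le hLne (hL hn hr hpC)
    rw [le_div_iff₀ hn'] at this
    linarith

/-- Positive graphs through `(u, 1)`, ordered by inclusion, have a maximal element by Zorn's lemma,
which is total by the extension step. -/
theorem exists_addMonoidHom_nonneg {u : Γ} (hu : u ∈ C) (hu' : -u ∉ C)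
    (hunit : ∀ x, ∃ n : ℕ, n • u - x ∈ C) :
    ∃ f : Γ →+ ℝ, f u = 1 ∧ ∀ x ∈ C, 0 ≤ f x := by
  let s : Set (AddSubgroup (Γ × ℝ)) := {R | (u, 1) ∈ R ∧ IsPositiveGraph C R}
  have hbase : AddSubgroup.zmultiples (u, (1 : ℝ)) ∈ s := by
    refine ⟨AddSubgroup.mem_zmultiples _, ?_⟩
    rintro _ ⟨j, rfl⟩ hj
    simpa using nonneg_of_zsmul_mem hu hu' hj
  obtain ⟨R, -, hRmax⟩ := zorn_le_nonempty₀ s (fun c hcs hc R hR => by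
    have hmem : ∀ {p}, p ∈ sSup c ↔ ∃ R ∈ c, p ∈ R :=
      AddSubgroup.mem_sSup_of_directedOn ⟨R, hR⟩ hc.directedOn
    refine ⟨sSup c, ⟨hmem.mpr ⟨R, hR, (hcs hR).1⟩, fun p hp => ?_⟩, fun _ => le_sSup⟩
    obtain ⟨R', hR', hpR'⟩ := hmem.mp hp
    exact (hcs hR').2 p hpR') _ hbase
  obtain ⟨huR, hR⟩ := hRmax.prop
  have htotal : ∀ x, ∃ r, (x, r) ∈ R := fun x => by
    obtain ⟨c, hc⟩ := hR.exists_sup_zmultiples huR hunit x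
    exact ⟨c, hRmax.2 ⟨AddSubgroup.mem_sup_left huR, hc⟩ le_sup_left
      (AddSubgroup.mem_sup_right (AddSubgroup.mem_zmultiples _))⟩
  choose f hf using htotal
  refine ⟨{ toFun := f, map_zero' := ?_, map_add' := fun x y => ?_ }, hR.eq_of_mem (hf u) huR,
    fun x hx => hR _ (hf x) hx⟩
  · exact hR.eq_of_mem (hf 0) (zero_mem R)
  · exact hR.eq_of_mem (hf (x + y)) (add_mem (hf x) (hf y))

end State

variable {G : Type*}

def mapLevel (h : ℕ → ℕ) (U : Set (G × ℕ)) : Set (G × ℕ) := Prod.map id h '' U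

theorem mapLevel_mapLevel (h h' : ℕ → ℕ) (U : Set (G × ℕ)) :
    mapLevel h (mapLevel h' U) = mapLevel (h ∘ h') U :=
  (image_comp _ _ U).symm

theorem mapLevel_union (h : ℕ → ℕ) (U V : Set (G × ℕ)) :
    mapLevel h (U ∪ V) = mapLevel h U ∪ mapLevel h V :=
  image_union _ U V

theorem mapLevel_id (U : Set (G × ℕ)) : mapLevel id U = U := by
  simp [mapLevel]

theorem disjoint_mapLevel {h h' : ℕ → ℕ} (hne : ∀ m m', h m ≠ h' m') (U V : Set (G × ℕ)) :
    Disjoint (mapLevel h U) (mapLevel h' V) := by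
  rw [disjoint_left]
  rintro _ ⟨x, -, rfl⟩ ⟨y, -, hxy⟩
  exact hne x.2 y.2 (congrArg Prod.snd hxy).symm

theorem mapLevel_prod (h : ℕ → ℕ) (E : Set G) (s : Set ℕ) :
    mapLevel h (E ×ˢ s) = E ×ˢ (h '' s) := by
  simp [mapLevel, prodMap_image_prod]

theorem prod_singleton_eq_mapLevel (A : Set G) (k : ℕ) :
    A ×ˢ {k} = mapLevel (· + k) (A ×ˢ {0}) := by
  rw [mapLevel_prod, image_singleton, zero_add]

theorem prod_Iio_succ (A : Set G) (k : ℕ) : A ×ˢ Iio (k + 1) = A ×ˢ Iio k ∪ A ×ˢ {k} := by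
  ext ⟨a, n⟩
  simp only [mem_union, mem_prod, mem_Iio, mem_singleton_iff, Nat.lt_succ_iff_lt_or_eq]
  tauto

theorem injective_two_mul : Injective (2 * · : ℕ → ℕ) := fun a b h => by simp only at h; omega

theorem injective_two_mul_add_one : Injective (2 * · + 1 : ℕ → ℕ) := fun a b h => by
  simp only at h; omega

def interleave (U V : Set (G × ℕ)) : Set (G × ℕ) :=
  mapLevel (2 * ·) U ∪ mapLevel (2 * · + 1) V

def realize : List (Set (G × ℕ)) → Set (G × ℕ)
  | [] => ∅
  | U :: l => interleave U (realize l)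

theorem card_mul_le_card_image_fst [DecidableEq G] {A : Set G} {k n : ℕ} {F : G × ℕ → G × ℕ}
    (hn : 0 < n) (hinj : InjOn F (A ×ˢ Iio (k * n))) (hmaps : MapsTo F (A ×ˢ Iio (k * n)) (A ×ˢ Iio n))
    {s : Finset G} (hs : ↑s ⊆ A) :
    s.card * k ≤ ((s ×ˢ Finset.range (k * n)).image fun y => (F y).1).card := by
  have hsub : ∀ y ∈ s ×ˢ Finset.range (k * n), y ∈ A ×ˢ Iio (k * n) := fun y hy =>
    ⟨hs (Finset.mem_product.mp hy).1, Finset.mem_range.mp (Finset.mem_product.mp hy).2⟩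
  refine Nat.le_of_mul_le_mul_right ?_ hn
  calc s.card * k * n = (s ×ˢ Finset.range (k * n)).card := by simp [mul_assoc]
    _ ≤ (((s ×ˢ Finset.range (k * n)).image fun y => (F y).1) ×ˢ Finset.range n).card :=
        Finset.card_le_card_of_injOn F
          (fun y hy => Finset.mem_product.mpr
            ⟨Finset.mem_image_of_mem _ hy, Finset.mem_range.mpr (hmaps (hsub y hy)).2⟩)
          (hinj.mono fun y hy => hsub y hy)
    _ = _ := by simp

/-- Hall's marriage theorem for the bipartite graph joining `(a, j) ∈ A ×ˢ Iio k` to the first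
coordinates of the images of `(a, i)`, `i < k * n`; `card_mul_le_card_image_fst` is Hall's
condition. -/
theorem exists_injective_of_mapsTo_prod_Iio {A : Set G} {k n : ℕ} {F : G × ℕ → G × ℕ}
    (hn : 0 < n) (hinj : InjOn F (A ×ˢ Iio (k * n)))
    (hmaps : MapsTo F (A ×ˢ Iio (k * n)) (A ×ˢ Iio n)) :
    ∃ φ : A ×ˢ Iio k → G, Injective φ ∧ ∀ x, ∃ i < k * n, (F (x.1.1, i)).1 = φ x := by
  classical
  let t : A ×ˢ Iio k → Finset G := fun x => (Finset.range (k * n)).image fun i => (F (x.1.1, i)).1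
  have hall : ∀ s : Finset (A ×ˢ Iio k), s.card ≤ (s.biUnion t).card := by
    intro s
    let s₀ : Finset G := s.image fun x => x.1.1
    have hs₀ : ↑s₀ ⊆ A := by
      intro a ha
      obtain ⟨x, -, rfl⟩ := Finset.mem_image.mp ha
      exact x.2.1
    have hbiUnion : s.biUnion t = (s₀ ×ˢ Finset.range (k * n)).image fun y => (F y).1 := by
      ext g
      simp only [t, s₀, Finset.mem_biUnion, Finset.mem_image, Finset.mem_product, Finset.mem_range]
      constructor
      · rintro ⟨x, hx, i, hi, rfl⟩
        exact ⟨(x.1.1, i), ⟨⟨x, hx, rfl⟩, hi⟩, rfl⟩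
      · rintro ⟨⟨a, i⟩, ⟨⟨x, hx, rfl⟩, hi⟩, rfl⟩
        exact ⟨x, hx, i, hi, rfl⟩
    calc s.card ≤ (s₀ ×ˢ Finset.range k).card :=
          Finset.card_le_card_of_injOn (fun x => x.1)
            (fun x hx => Finset.mem_product.mpr
              ⟨Finset.mem_image_of_mem _ hx, Finset.mem_range.mpr x.2.2⟩)
            (fun x _ y _ hxy => Subtype.ext hxy)
      _ = s₀.card * k := by simp
      _ ≤ (s.biUnion t).card := hbiUnion ▸ card_mul_le_card_image_fst hn hinj hmaps hs₀
  obtain ⟨φ, hφinj, hφt⟩ := (Finset.all_card_le_biUnion_card_iff_exists_injective t).mp hall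
  exact ⟨φ, hφinj, fun x => by simpa [t] using hφt x⟩

variable [Group G]

/-- Level `n` of `G × ℕ` holds a copy of a subset of `G`; an embedding may move points between
levels freely but must act on the `G`-coordinate by finitely many left translations. -/
def Embeds (U V : Set (G × ℕ)) : Prop :=
  ∃ (f : G × ℕ → G × ℕ) (S : Finset G),
    InjOn f U ∧ MapsTo f U V ∧ ∀ x ∈ U, ∃ g ∈ S, (f x).1 = g * x.1

namespace Embeds

variable {U V W U' V' : Set (G × ℕ)}

theorem of_subset (h : U ⊆ V) : Embeds U V :=
  ⟨id, {1}, injOn_id U, h, fun _ _ => ⟨1, Finset.mem_singleton_self 1, (one_mul _).symm⟩⟩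

theorem refl (U : Set (G × ℕ)) : Embeds U U := of_subset subset_rfl

theorem trans (h : Embeds U V) (h' : Embeds V W) : Embeds U W := by
  classical
  obtain ⟨f, S, hinj, hmaps, hS⟩ := h
  obtain ⟨f', S', hinj', hmaps', hS'⟩ := h'
  refine ⟨f' ∘ f, S' * S, hinj'.comp hinj hmaps, hmaps'.comp hmaps, fun x hx => ?_⟩
  obtain ⟨g, hg, hfx⟩ := hS x hx
  obtain ⟨g', hg', hf'x⟩ := hS' (f x) (hmaps hx)
  exact ⟨g' * g, Finset.mul_mem_mul hg' hg, by simp [hf'x, hfx, mul_assoc]⟩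

theorem mono_right (h : Embeds U V) (hVW : V ⊆ W) : Embeds U W := h.trans (of_subset hVW)

theorem union (h : Embeds U V) (h' : Embeds U' V') (hV : Disjoint V V') :
    Embeds (U ∪ U') (V ∪ V') := by
  classical
  obtain ⟨f, S, hinj, hmaps, hS⟩ := h
  obtain ⟨f', S', hinj', hmaps', hS'⟩ := h'
  have hf : EqOn (U.piecewise f f') f U := piecewise_eqOn U f f'
  have hf' : EqOn (U.piecewise f f') f' (U' \ U) := fun x hx =>
    piecewise_eqOn_compl U f f' hx.2
  have hmapsU : MapsTo (U.piecewise f f') U V := fun x hx => hf hx ▸ hmaps hx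
  have hmapsU' : MapsTo (U.piecewise f f') (U' \ U) V' := fun x hx => hf' hx ▸ hmaps' hx.1
  refine ⟨U.piecewise f f', S ∪ S', ?_, ?_, ?_⟩
  · rw [← union_sdiff_self, injOn_union disjoint_sdiff_right]
    exact ⟨hinj.congr hf.symm, (hinj'.mono sdiff_subset).congr hf'.symm,
      fun x hx y hy hxy => hV.ne_of_mem (hmapsU hx) (hmapsU' hy) hxy⟩
  · rw [← union_sdiff_self]
    exact hmapsU.union_union hmapsU'
  · intro x hx
    by_cases hxU : x ∈ U
    · obtain ⟨g, hg, hfx⟩ := hS x hxU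
      exact ⟨g, Finset.mem_union_left _ hg, by rw [hf hxU, hfx]⟩
    · obtain ⟨g, hg, hfx⟩ := hS' x (hx.resolve_left hxU)
      exact ⟨g, Finset.mem_union_right _ hg, by rw [hf' ⟨hx.resolve_left hxU, hxU⟩, hfx]⟩

end Embeds

theorem embeds_mul_left_image_prod (g : G) (E : Set G) (s : Set ℕ) :
    Embeds (E ×ˢ s) (((g * ·) '' E) ×ˢ s) := by
  refine ⟨Prod.map (g * ·) id, {g}, ?_, ?_, fun _ _ => ⟨g, Finset.mem_singleton_self g, rfl⟩⟩
  · exact ((mul_right_injective g).prodMap injective_id).injOn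
  · rintro ⟨a, n⟩ ⟨ha, hn⟩
    exact ⟨mem_image_of_mem _ ha, hn⟩

theorem embeds_mapLevel_mapLevel {h h' : ℕ → ℕ} (hh : Injective h) (hh' : Injective h')
    (U : Set (G × ℕ)) : Embeds (mapLevel h U) (mapLevel h' U) := by
  have hcomp : ∀ x : G × ℕ, Prod.map id (h' ∘ invFun h) (Prod.map id h x) = Prod.map id h' x :=
    fun x => Prod.ext rfl (congrArg h' (leftInverse_invFun hh x.2))
  refine ⟨Prod.map id (h' ∘ invFun h), {1}, ?_, ?_,
    fun _ _ => ⟨1, Finset.mem_singleton_self 1, (one_mul _).symm⟩⟩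
  · rintro _ ⟨x, -, rfl⟩ _ ⟨y, -, rfl⟩ hxy
    rw [hcomp, hcomp] at hxy
    rw [(injective_id.prodMap hh').eq_iff.mp hxy]
  · rintro _ ⟨x, hx, rfl⟩
    exact ⟨x, hx, (hcomp x).symm⟩

theorem embeds_mapLevel {h : ℕ → ℕ} (hh : Injective h) (U : Set (G × ℕ)) :
    Embeds U (mapLevel h U) := by
  simpa only [mapLevel_id] using embeds_mapLevel_mapLevel injective_id hh U

theorem mapLevel_embeds {h : ℕ → ℕ} (hh : Injective h) (U : Set (G × ℕ)) :
    Embeds (mapLevel h U) U := by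
  simpa only [mapLevel_id] using embeds_mapLevel_mapLevel hh injective_id U

theorem prod_singleton_embeds (A : Set G) (k : ℕ) : Embeds (A ×ˢ {k}) (A ×ˢ {0}) := by
  rw [prod_singleton_eq_mapLevel A k]
  exact mapLevel_embeds (add_left_injective k) _

section Interleave

variable {U V W X U' V' : Set (G × ℕ)}

theorem Embeds.interleave (h : Embeds U U') (h' : Embeds V V') :
    Embeds (interleave U V) (interleave U' V') :=
  ((mapLevel_embeds injective_two_mul U).trans
      (h.trans (embeds_mapLevel injective_two_mul U'))).union
    ((mapLevel_embeds injective_two_mul_add_one V).trans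
      (h'.trans (embeds_mapLevel injective_two_mul_add_one V')))
    (disjoint_mapLevel (by omega) _ _)

theorem embeds_interleave_right (U X : Set (G × ℕ)) : Embeds X (interleave U X) :=
  (embeds_mapLevel injective_two_mul_add_one X).mono_right subset_union_right

theorem interleave_left_comm_embeds (U V W : Set (G × ℕ)) :
    Embeds (interleave U (interleave V W)) (interleave V (interleave U W)) := by
  have h₄₁ := injective_two_mul_add_one.comp injective_two_mul
  simp only [interleave, mapLevel_union, mapLevel_mapLevel]
  rw [union_left_comm (mapLevel _ V)]
  refine (embeds_mapLevel_mapLevel injective_two_mul h₄₁ U).union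
    ((embeds_mapLevel_mapLevel h₄₁ injective_two_mul V).union (.refl _)
      (disjoint_mapLevel (fun _ _ => by simp only [comp_apply]; omega) _ _))
    (disjoint_union_right.mpr ⟨disjoint_mapLevel (fun _ _ => by simp only [comp_apply]; omega) _ _,
      disjoint_mapLevel (fun _ _ => by simp only [comp_apply]; omega) _ _⟩)

theorem interleave_interleave_embeds (hUV : Disjoint U V) (X : Set (G × ℕ)) :
    Embeds (interleave U (interleave V X)) (interleave (U ∪ V) X) := by
  simp only [interleave, mapLevel_union, mapLevel_mapLevel, union_assoc]
  refine (Embeds.refl _).union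
    ((embeds_mapLevel_mapLevel (injective_two_mul_add_one.comp injective_two_mul)
      injective_two_mul V).union
      (embeds_mapLevel_mapLevel (injective_two_mul_add_one.comp injective_two_mul_add_one)
        injective_two_mul_add_one X) (disjoint_mapLevel (by omega) _ _))
    (disjoint_union_right.mpr
      ⟨(disjoint_image_iff (injective_id.prodMap injective_two_mul)).mpr hUV,
        disjoint_mapLevel (by omega) _ _⟩)

theorem interleave_union_embeds (U V X : Set (G × ℕ)) :
    Embeds (interleave (U ∪ V) X) (interleave U (interleave V X)) := by
  simp only [interleave, mapLevel_union, mapLevel_mapLevel, union_assoc]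
  refine (Embeds.refl _).union
    ((embeds_mapLevel_mapLevel injective_two_mul
      (injective_two_mul_add_one.comp injective_two_mul) V).union
      (embeds_mapLevel_mapLevel injective_two_mul_add_one
        (injective_two_mul_add_one.comp injective_two_mul_add_one) X)
      (disjoint_mapLevel (fun _ _ => by simp only [comp_apply]; omega) _ _))
    (disjoint_union_right.mpr ⟨disjoint_mapLevel (fun _ _ => by simp only [comp_apply]; omega) _ _,
      disjoint_mapLevel (fun _ _ => by simp only [comp_apply]; omega) _ _⟩)

theorem embeds_realize_of_perm {l l' : List (Set (G × ℕ))} (h : l.Perm l') :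
    Embeds (realize l) (realize l') := by
  induction h with
  | nil => exact .refl _
  | cons U _ ih => exact (Embeds.refl U).interleave ih
  | swap U V l => exact interleave_left_comm_embeds V U (realize l)
  | trans _ _ ih ih' => exact ih.trans ih'

theorem embeds_realize_append (l L : List (Set (G × ℕ))) :
    Embeds (realize L) (realize (l ++ L)) := by
  induction l with
  | nil => exact .refl _
  | cons U l ih => exact ih.trans (embeds_interleave_right U _)

theorem prod_Iio_embeds_realize_replicate (A : Set G) (k : ℕ) :
    Embeds (A ×ˢ Iio k) (realize (List.replicate k (A ×ˢ {0}))) := by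
  induction k with
  | zero => exact Embeds.of_subset (by simp [realize])
  | succ k ih =>
    rw [prod_Iio_succ, union_comm, prod_singleton_eq_mapLevel, List.replicate_succ, realize,
      interleave]
    exact (embeds_mapLevel_mapLevel (add_left_injective k) injective_two_mul _).union
      (ih.trans (embeds_mapLevel injective_two_mul_add_one _)) (disjoint_mapLevel (by omega) _ _)

end Interleave

section Bounded

variable {A : Set G} {U V : Set (G × ℕ)}

def BoundedBy (A : Set G) (U : Set (G × ℕ)) : Prop := ∃ n, Embeds U (A ×ˢ Iio n)

theorem BoundedBy.of_embeds (hV : BoundedBy A V) (h : Embeds U V) : BoundedBy A U :=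
  let ⟨n, hn⟩ := hV
  ⟨n, h.trans hn⟩

theorem BoundedBy.union (hU : BoundedBy A U) (hV : BoundedBy A V) : BoundedBy A (U ∪ V) := by
  obtain ⟨n, hn⟩ := hU
  obtain ⟨m, hm⟩ := hV
  have hshift : mapLevel (· + n) (A ×ˢ Iio m) ⊆ A ×ˢ Ico n (n + m) := by
    rintro _ ⟨⟨a, k⟩, ⟨ha, hk⟩, rfl⟩
    exact ⟨ha, by simp only [Prod.map_snd, mem_Ico]; simp only [mem_Iio] at hk; omega⟩
  refine ⟨n + m, ?_⟩
  rw [← Iio_union_Ico_eq_Iio (Nat.le_add_right n m), prod_union]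
  exact hn.union ((hm.trans (embeds_mapLevel (add_left_injective n) _)).mono_right hshift)
    (disjoint_prod.mpr (Or.inr ((Iio_disjoint_Ici le_rfl).mono_right Ico_subset_Ici_self)))

theorem boundedBy_realize {l : List (Set (G × ℕ))} (hl : ∀ U ∈ l, BoundedBy A U) :
    BoundedBy A (realize l) := by
  induction l with
  | nil => exact ⟨0, .of_subset (by simp [realize])⟩
  | cons U l ih =>
    simp only [List.mem_cons, forall_eq_or_imp] at hl
    exact (hl.1.of_embeds (mapLevel_embeds injective_two_mul U)).union
      ((ih hl.2).of_embeds (mapLevel_embeds injective_two_mul_add_one _))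

end Bounded

theorem prod_Iio_embeds_of_mul {A : Set G} {k n : ℕ} (hn : 0 < n)
    (h : Embeds (A ×ˢ Iio (k * n)) (A ×ˢ Iio n)) : Embeds (A ×ˢ Iio k) (A ×ˢ {0}) := by
  classical
  obtain ⟨F, S, hinj, hmaps, hS⟩ := h
  obtain ⟨φ, hφinj, hφ⟩ := exists_injective_of_mapsTo_prod_Iio hn hinj hmaps
  refine ⟨fun x => if hx : x ∈ A ×ˢ Iio k then (φ ⟨x, hx⟩, 0) else x, S, ?_, ?_, ?_⟩
  · intro x hx y hy hxy
    simp only [dif_pos hx, dif_pos hy, Prod.mk.injEq, and_true] at hxy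
    exact congrArg Subtype.val (hφinj hxy)
  · intro x hx
    obtain ⟨i, hi, hFi⟩ := hφ ⟨x, hx⟩
    have hxi : (x.1, i) ∈ A ×ˢ Iio (k * n) := ⟨hx.1, hi⟩
    simp only [dif_pos hx]
    exact ⟨hFi ▸ (hmaps hxi).1, rfl⟩
  · intro x hx
    obtain ⟨i, hi, hFi⟩ := hφ ⟨x, hx⟩
    obtain ⟨g, hg, hFg⟩ := hS (x.1, i) ⟨hx.1, hi⟩
    exact ⟨g, hg, by simp only [dif_pos hx, ← hFi, hFg]⟩

theorem exists_partition_of_injOn {A : Set G} {φ : G → G} {S : Finset G} (hinj : InjOn φ A)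
    (hS : ∀ a ∈ A, ∃ g ∈ S, φ a = g * a) :
    ∃ (n : ℕ) (B : Fin n → Set G) (s : Fin n → G),
      ⋃ i, B i = φ '' A ∧ (∀ i i', i ≠ i' → Disjoint (B i) (B i')) ∧
      (⋃ i, (s i * ·) '' B i) = A ∧
      ∀ i i', i ≠ i' → Disjoint ((s i * ·) '' B i) ((s i' * ·) '' B i') := by
  choose! σ hσS hσ using hS
  let e := S.equivFin
  let P : Fin S.card → Set G := fun i => {a ∈ A | σ a = e.symm i}
  have hPA : ⋃ i, P i = A := by
    refine Subset.antisymm (iUnion_subset fun i => sep_subset _ _) fun a ha => ?_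
    exact mem_iUnion.mpr ⟨e ⟨σ a, hσS a ha⟩, ha, by simp⟩
  have hPd : ∀ i i', i ≠ i' → Disjoint (P i) (P i') := fun i i' hii' =>
    disjoint_left.mpr fun a ha ha' => hii' (e.symm.injective (Subtype.ext (ha.2.symm.trans ha'.2)))
  have htrans : ∀ i, ((e.symm i : G)⁻¹ * ·) '' (φ '' P i) = P i := fun i => by
    rw [image_image]
    refine EqOn.image_eq_self fun a ha => ?_
    simp only [id, ← ha.2, hσ a ha.1, inv_mul_cancel_left]
  refine ⟨S.card, fun i => φ '' P i, fun i => (e.symm i : G)⁻¹, ?_, ?_, ?_, ?_⟩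
  · rw [← image_iUnion, hPA]
  · exact fun i i' hii' => (hPd i i' hii').image hinj (sep_subset _ _) (sep_subset _ _)
  · simp only [htrans, hPA]
  · simpa only [htrans] using hPd

theorem paradoxical_of_embeds {A : Set G} (hA : A.Nonempty)
    (h : Embeds (A ×ˢ Iio 2) (A ×ˢ {0})) : Paradoxical A := by
  obtain ⟨F, S, hinj, hmaps, hS⟩ := h
  have hlevel : ∀ {a b j j'}, a ∈ A → b ∈ A → j < 2 → j' < 2 →
      (F (a, j)).1 = (F (b, j')).1 → a = b ∧ j = j' := by
    intro a b j j' ha hb hj hj' hab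
    have haj : (a, j) ∈ A ×ˢ Iio 2 := ⟨ha, hj⟩
    have hbj : (b, j') ∈ A ×ˢ Iio 2 := ⟨hb, hj'⟩
    exact Prod.mk.inj (hinj haj hbj (Prod.ext hab ((hmaps haj).2.trans (hmaps hbj).2.symm)))
  have hslice : ∀ j < 2, InjOn (fun a => (F (a, j)).1) A ∧
      (fun a => (F (a, j)).1) '' A ⊆ A ∧ ∀ a ∈ A, ∃ g ∈ S, (F (a, j)).1 = g * a :=
    fun j hj => ⟨fun a ha b hb hab => (hlevel ha hb hj hj hab).1,
      image_subset_iff.mpr fun a ha => (hmaps (show (a, j) ∈ A ×ˢ Iio 2 from ⟨ha, hj⟩)).1,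
      fun a ha => hS (a, j) ⟨ha, hj⟩⟩
  obtain ⟨hinj₀, hA₀, hS₀⟩ := hslice 0 two_pos
  obtain ⟨hinj₁, hA₁, hS₁⟩ := hslice 1 one_lt_two
  obtain ⟨n, B, s, hB, hBd, hsB, hsBd⟩ := exists_partition_of_injOn hinj₀ hS₀
  obtain ⟨m, C, t, hC, hCd, htC, htCd⟩ := exists_partition_of_injOn hinj₁ hS₁
  refine ⟨hA, n, m, B, C, s, t, fun i => (subset_iUnion B i).trans (hB ▸ hA₀),
    fun j => (subset_iUnion C j).trans (hC ▸ hA₁), hBd, hCd, ?_, hsB, hsBd, htC, htCd⟩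
  rw [hB, hC, disjoint_left]
  rintro _ ⟨a, ha, rfl⟩ ⟨b, hb, hba⟩
  exact absurd (hlevel hb ha one_lt_two two_pos hba).2 one_ne_zero

open Finsupp

section Cone

variable {A : Set G}

variable (A) in
abbrev BoundedSet : Type _ := {U : Set (G × ℕ) // BoundedBy A U}

variable (A) in
def layerZero : BoundedSet A := ⟨A ×ˢ {0}, 1, .of_subset (prod_mono subset_rfl (by simp))⟩

noncomputable def formalSum (l : List (BoundedSet A)) : BoundedSet A →₀ ℤ :=
  (l.map (single · 1)).sum

theorem formalSum_cons (U : BoundedSet A) (l : List (BoundedSet A)) :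
    formalSum (U :: l) = single U 1 + formalSum l := by
  simp [formalSum]

theorem formalSum_apply (l : List (BoundedSet A)) (U : BoundedSet A) :
    formalSum l U = l.count U := by
  induction l with
  | nil => simp [formalSum]
  | cons V l ih =>
    simp only [formalSum, List.map_cons, List.sum_cons] at ih ⊢
    rw [Finsupp.add_apply, ih, List.count_cons, single_apply]
    by_cases h : V = U
    · simp [h, add_comm]
    · simp [h, mt Subtype.ext h]

theorem perm_of_formalSum_eq {l l' : List (BoundedSet A)} (h : formalSum l = formalSum l') :
    l.Perm l' := by
  classical
  refine List.perm_iff_count.mpr fun U => ?_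
  have hU := congrArg (· U) h
  simp only [formalSum_apply] at hU
  exact_mod_cast hU

variable (A) in
/-- Quantifying over the extra copies `L` makes the relation stable under adding copies, which is
what closes the cone under addition. -/
def cone : AddSubmonoid (BoundedSet A →₀ ℤ) where
  carrier := {w | ∃ P N : List (BoundedSet A), w = formalSum P - formalSum N ∧
    ∀ L, Embeds (realize (N.map Subtype.val ++ L)) (realize (P.map Subtype.val ++ L))}
  zero_mem' := ⟨[], [], by simp [formalSum], fun _ => .refl _⟩
  add_mem' := by
    rintro _ _ ⟨P, N, rfl, h⟩ ⟨P', N', rfl, h'⟩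
    refine ⟨P ++ P', N ++ N', by simp only [formalSum, List.map_append, List.sum_append]; abel,
      fun L => ?_⟩
    simp only [List.map_append, List.append_assoc]
    exact (h _).trans <| (embeds_realize_of_perm (List.perm_append_comm_assoc _ _ _)).trans <|
      (h' _).trans (embeds_realize_of_perm (List.perm_append_comm_assoc _ _ _))

theorem single_mem_cone (U : BoundedSet A) : single U 1 ∈ cone A :=
  ⟨[U], [], by simp [formalSum], fun L => embeds_interleave_right U.1 (realize L)⟩

theorem sub_mem_cone {U V : BoundedSet A} (h : Embeds U.1 V.1) :
    single V 1 - single U 1 ∈ cone A :=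
  ⟨[V], [U], by simp [formalSum], fun L => h.interleave (.refl (realize L))⟩

theorem union_sub_mem_cone {U V W : BoundedSet A} (hUV : Disjoint U.1 V.1)
    (hW : W.1 = U.1 ∪ V.1) : single W 1 - single U 1 - single V 1 ∈ cone A :=
  ⟨[W], [U, V], by simp [formalSum, sub_sub], fun L => by
    simpa [hW, realize] using interleave_interleave_embeds hUV (realize L)⟩

theorem sub_union_mem_cone {U V W : BoundedSet A} (hW : W.1 = U.1 ∪ V.1) :
    single U 1 + single V 1 - single W 1 ∈ cone A :=
  ⟨[U, V], [W], by simp [formalSum], fun L => by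
    simpa [hW, realize] using interleave_union_embeds U.1 V.1 (realize L)⟩

theorem nsmul_sub_single_prod_Iio_mem_cone (m : ℕ) :
    m • single (layerZero A) 1 - single ⟨A ×ˢ Iio m, m, .refl _⟩ 1 ∈ cone A := by
  induction m with
  | zero =>
    have hempty : Disjoint (A ×ˢ Iio 0) (A ×ˢ Iio 0) := by simp
    simpa using union_sub_mem_cone (W := ⟨A ×ˢ Iio 0, 0, .refl _⟩) hempty (union_self _).symm
  | succ m ih =>
    let layer : BoundedSet A := ⟨A ×ˢ {m}, (layerZero A).2.of_embeds (prod_singleton_embeds A m)⟩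
    have hlayer : single (layerZero A) 1 - single layer 1 ∈ cone A :=
      sub_mem_cone (prod_singleton_embeds A m)
    have hsplit := sub_union_mem_cone (U := ⟨A ×ˢ Iio m, m, .refl _⟩) (V := layer)
      (W := ⟨A ×ˢ Iio (m + 1), m + 1, .refl _⟩) (prod_Iio_succ A m)
    convert add_mem ih (add_mem hlayer hsplit) using 1
    rw [succ_nsmul]
    abel

theorem exists_nsmul_sub_mem_cone (w : BoundedSet A →₀ ℤ) :
    ∃ n : ℕ, n • single (layerZero A) 1 - w ∈ cone A := by
  induction w using Finsupp.induction_linear with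
  | zero => exact ⟨0, by simp⟩
  | add w w' ih ih' =>
    obtain ⟨n, hn⟩ := ih
    obtain ⟨n', hn'⟩ := ih'
    exact ⟨n + n', by convert add_mem hn hn' using 1; rw [add_nsmul]; abel⟩
  | single U b =>
    obtain ⟨m, hm⟩ := U.2
    have hU : m • single (layerZero A) 1 - single U 1 ∈ cone A := by
      convert add_mem (nsmul_sub_single_prod_Iio_mem_cone m)
        (sub_mem_cone (V := ⟨_, m, .refl _⟩) hm) using 1
      abel
    have hk : ∀ k : ℕ, single U (k : ℤ) = k • single U 1 := fun k => by
      rw [← natCast_zsmul, smul_single_one]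
    obtain ⟨k, rfl | rfl⟩ := Int.eq_nat_or_neg b
    · refine ⟨k * m, ?_⟩
      rw [hk, mul_comm, mul_nsmul, ← nsmul_sub]
      exact (cone A).nsmul_mem hU k
    · refine ⟨0, ?_⟩
      rw [zero_nsmul, zero_sub, single_neg, neg_neg, hk]
      exact (cone A).nsmul_mem (single_mem_cone U) k

/-- If the negative of the class of `A` were positive, some bounded realization `X` would absorb
a copy of `A`, hence `k` copies for every `k`; with `X` embedding into `m + 1` copies of `A` this
gives `2 * (m + 1)` copies inside `m + 1`, and Hall's theorem yields a paradoxical decomposition. -/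
theorem neg_single_not_mem_cone (hA : A.Nonempty) (hA' : ¬ Paradoxical A) :
    -single (layerZero A) 1 ∉ cone A := by
  rintro ⟨P, N, hPN, hemb⟩
  have hperm : N.Perm (layerZero A :: P) :=
    perm_of_formalSum_eq <| calc
      formalSum N = formalSum P - (formalSum P - formalSum N) := by abel
      _ = formalSum (layerZero A :: P) := by
        rw [← hPN, formalSum_cons]
        abel
  let X := P.map Subtype.val
  have hstep : ∀ L, Embeds (realize (A ×ˢ {0} :: (X ++ L))) (realize (X ++ L)) := fun L =>
    (embeds_realize_of_perm ((hperm.map Subtype.val).append_right L).symm).trans (hemb L)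
  have hiter : ∀ k, Embeds (realize (X ++ List.replicate k (A ×ˢ {0}))) (realize X) := by
    intro k
    induction k with
    | zero => simp only [List.replicate_zero, List.append_nil]; exact .refl _
    | succ k ih =>
      rw [List.replicate_succ]
      exact (embeds_realize_of_perm List.perm_middle).trans ((hstep _).trans ih)
  obtain ⟨m, hm⟩ := boundedBy_realize (l := X) fun U hU => by
    obtain ⟨V, -, rfl⟩ := List.mem_map.mp hU
    exact V.2
  have hdouble : Embeds (A ×ˢ Iio (2 * (m + 1))) (A ×ˢ Iio (m + 1)) :=
    (prod_Iio_embeds_realize_replicate A _).trans <| (embeds_realize_append X _).trans <|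
      (hiter _).trans (hm.mono_right (prod_mono subset_rfl (Iio_subset_Iio m.le_succ)))
  exact hA' (paradoxical_of_embeds hA (prod_Iio_embeds_of_mul m.succ_pos hdouble))

theorem map_single_mono {f : (BoundedSet A →₀ ℤ) →+ ℝ} (hf : ∀ x ∈ cone A, 0 ≤ f x)
    {U V : BoundedSet A} (h : Embeds U.1 V.1) : f (single U 1) ≤ f (single V 1) := by
  have := hf _ (sub_mem_cone h)
  rwa [map_sub, sub_nonneg] at this

theorem map_single_union {f : (BoundedSet A →₀ ℤ) →+ ℝ} (hf : ∀ x ∈ cone A, 0 ≤ f x)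
    {U V W : BoundedSet A} (hUV : Disjoint U.1 V.1) (hW : W.1 = U.1 ∪ V.1) :
    f (single W 1) = f (single U 1) + f (single V 1) := by
  have h₁ := hf _ (union_sub_mem_cone hUV hW)
  have h₂ := hf _ (sub_union_mem_cone hW)
  simp only [map_sub, map_add] at h₁ h₂
  linarith

end Cone

/-- A state `f` on the cone yields `ν U = f [U]` on bounded sets and `ν U = ∞` otherwise. -/
theorem exists_additive_monotone_of_not_paradoxical {A : Set G} (hA : A.Nonempty)
    (hA' : ¬ Paradoxical A) :
    ∃ ν : Set (G × ℕ) → ℝ≥0∞, ν ∅ = 0 ∧ (∀ U V, Disjoint U V → ν (U ∪ V) = ν U + ν V) ∧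
      (∀ U V, Embeds U V → ν U ≤ ν V) ∧ ν (A ×ˢ {0}) = 1 := by
  classical
  obtain ⟨f, hfu, hf⟩ := exists_addMonoidHom_nonneg (single_mem_cone (layerZero A))
    (neg_single_not_mem_cone hA hA') exists_nsmul_sub_mem_cone
  let ν : Set (G × ℕ) → ℝ≥0∞ := fun U =>
    if hU : BoundedBy A U then ENNReal.ofReal (f (single ⟨U, hU⟩ 1)) else ⊤
  have hν : ∀ {U} (hU : BoundedBy A U), ν U = ENNReal.ofReal (f (single ⟨U, hU⟩ 1)) :=
    fun hU => dif_pos hU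
  have hν' : ∀ {U}, ¬ BoundedBy A U → ν U = ⊤ := fun hU => dif_neg hU
  have hnonneg : ∀ U, 0 ≤ f (single U 1) := fun U => hf _ (single_mem_cone U)
  refine ⟨ν, ?_, fun U V hUV => ?_, fun U V hUV => ?_, ?_⟩
  · have hempty : BoundedBy A ∅ := ⟨0, .of_subset (empty_subset _)⟩
    have := map_single_union hf (U := ⟨∅, hempty⟩) (V := ⟨∅, hempty⟩) (W := ⟨∅, hempty⟩)
      (disjoint_empty _) (union_self _).symm
    rw [hν hempty, show f (single ⟨∅, hempty⟩ 1) = 0 by linarith, ENNReal.ofReal_zero]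
  · by_cases hU : BoundedBy A U
    · by_cases hV : BoundedBy A V
      · rw [hν (hU.union hV), hν hU, hν hV,
          map_single_union hf (U := ⟨U, hU⟩) (V := ⟨V, hV⟩) hUV rfl,
          ENNReal.ofReal_add (hnonneg _) (hnonneg _)]
      · rw [hν' hV, hν' fun h => hV (h.of_embeds (.of_subset subset_union_right)), add_top]
    · rw [hν' hU, hν' fun h => hU (h.of_embeds (.of_subset subset_union_left)), top_add]
  · by_cases hV : BoundedBy A V
    · have hU := hV.of_embeds hUV
      rw [hν hU, hν hV]
      exact ENNReal.ofReal_le_ofReal (map_single_mono hf (U := ⟨U, hU⟩) (V := ⟨V, hV⟩) hUV)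
    · rw [hν' hV]
      exact le_top
  · exact (hν (layerZero A).2).trans ((congrArg ENNReal.ofReal hfu).trans ENNReal.ofReal_one)

theorem supramenable_of_forall_not_paradoxical (h : ∀ A : Set G, ¬ Paradoxical A) :
    Supramenable G := by
  intro A hA
  obtain ⟨ν, hν₀, hνadd, hνmono, hνA⟩ := exists_additive_monotone_of_not_paradoxical hA (h A)
  refine ⟨fun E => ν (E ×ˢ {0}), ⟨by simpa using hν₀, fun E F hEF => ?_, fun g E => ?_⟩, hνA⟩
  · dsimp only
    rw [union_prod]
    exact hνadd _ _ (disjoint_prod.mpr (Or.inl hEF))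
  · refine le_antisymm (hνmono _ _ ?_) (hνmono _ _ (embeds_mul_left_image_prod g E _))
    have hE : (g⁻¹ * ·) '' ((g * ·) '' E) = E := by
      rw [image_image]
      simp only [inv_mul_cancel_left, image_id']
    simpa only [hE] using embeds_mul_left_image_prod g⁻¹ ((g * ·) '' E) {0}

end Tarski

/-- A group is supramenable if and only if it contains no paradoxical subset. -/
theorem supramenable_iff_no_paradoxical (G : Type*) [Group G] :
    Supramenable G ↔ ∀ A : Set G, ¬ Paradoxical A := by
  refine ⟨fun h A hA => ?_, Tarski.supramenable_of_forall_not_paradoxical⟩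
  obtain ⟨μ, hμ, hμA⟩ := h A hA.1
  exact hμ.not_paradoxical hμA hA
end

section
/- Let τ be a trace (positive tracial linear functional) on a C*-algebra A, and let I and J be closed two-sided ideals of A. If τ = τ_x is the norm-preserving extension of a positive functional x on I, then ‖τ_x|_J‖ = ‖τ_x|_{J ∩ I}‖. -/
open scoped ComplexOrder

section AuxHelpers
open Filter Topology Unitization

variable {A : Type*} [NonUnitalCStarAlgebra A]



lemma aux_exists_sqrt (x : A) (hsa : IsSelfAdjoint x)
    (hq : ∀ t ∈ quasispectrum ℝ x, 0 ≤ t) : ∃ s : A, x = star s * s := by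
  refine ⟨cfcₙ Real.sqrt x, ?_⟩
  have hs : IsSelfAdjoint (cfcₙ Real.sqrt x) := cfcₙ_predicate Real.sqrt x
  rw [hs.star_eq, ← cfcₙ_mul Real.sqrt Real.sqrt x (by fun_prop) (by simp) (by fun_prop) (by simp)]
  have : cfcₙ (fun t => Real.sqrt t * Real.sqrt t) x = cfcₙ (id : ℝ → ℝ) x :=
    cfcₙ_congr (fun t ht => Real.mul_self_sqrt (hq t ht))
  rw [this, cfcₙ_id ℝ x hsa]
lemma aux_pos [PartialOrder A] [StarOrderedRing A] (τ : A →L[ℂ] ℂ)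
    (hτ : ∀ a : A, 0 ≤ τ (star a * a)) {x : A} (hx : 0 ≤ x) : 0 ≤ τ x := by
  rw [StarOrderedRing.nonneg_iff] at hx
  induction hx using AddSubmonoid.closure_induction with
  | mem y hy => obtain ⟨s, rfl⟩ := hy; exact hτ s
  | zero => simp
  | add x y _ _ hx hy => rw [map_add]; exact add_nonneg hx hy

lemma aux_mono [PartialOrder A] [StarOrderedRing A] (τ : A →L[ℂ] ℂ)
    (hτ : ∀ a : A, 0 ≤ τ (star a * a)) {x y : A} (hxy : x ≤ y) :
    (τ x).re ≤ (τ y).re := by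
  have h := aux_pos τ hτ (sub_nonneg.2 hxy)
  rw [map_sub] at h
  have := (Complex.le_def.mp h).1
  simpa using this


lemma aux_im (τ : A →L[ℂ] ℂ) (hτ : ∀ a : A, 0 ≤ τ (star a * a)) (a : A) :
    (τ (star a * a)).im = 0 := by
  have := (Complex.le_def.mp (hτ a)).2
  simpa using this.symm

lemma aux_re (τ : A →L[ℂ] ℂ) (hτ : ∀ a : A, 0 ≤ τ (star a * a)) (a : A) :
    0 ≤ (τ (star a * a)).re := by
  have := (Complex.le_def.mp (hτ a)).1
  simpa using this

lemma aux_expand (τ : A →L[ℂ] ℂ) (t : ℂ) (a b : A) :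
    τ (star (t • a + b) * (t • a + b)) =
      (starRingEnd ℂ t * t) * τ (star a * a) + starRingEnd ℂ t * τ (star a * b)
        + t * τ (star b * a) + τ (star b * b) := by
  simp only [star_add, star_smul, add_mul, mul_add, smul_mul_assoc, mul_smul_comm, map_add,
    map_smul, Complex.star_def, smul_eq_mul, smul_smul]
  ring

/-- Hermitian symmetry of the sesquilinear form. -/
lemma aux_herm (τ : A →L[ℂ] ℂ) (hτ : ∀ a : A, 0 ≤ τ (star a * a)) (a b : A) :
    τ (star b * a) = starRingEnd ℂ (τ (star a * b)) := by
  have h1 : (τ (star ((1:ℂ) • a + b) * ((1:ℂ) • a + b))).im = 0 := aux_im τ hτ _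
  have h2 : (τ (star (Complex.I • a + b) * (Complex.I • a + b))).im = 0 := aux_im τ hτ _
  rw [aux_expand] at h1 h2
  have ha := aux_im τ hτ a
  have hb := aux_im τ hτ b
  simp only [Complex.add_im, Complex.mul_im, Complex.mul_re, Complex.conj_re, Complex.conj_im,
    Complex.I_re, Complex.I_im, Complex.one_re, Complex.one_im, ha, hb] at h1 h2
  apply Complex.ext <;> simp only [Complex.conj_re, Complex.conj_im] <;> nlinarith [h1, h2]

lemma aux_cs_re (τ : A →L[ℂ] ℂ) (hτ : ∀ a : A, 0 ≤ τ (star a * a)) (a b : A) :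
    (τ (star a * b)).re ^ 2 ≤ (τ (star a * a)).re * (τ (star b * b)).re := by
  have key : ∀ r : ℝ, 0 ≤ (τ (star a * a)).re * (r * r) + (2 * (τ (star a * b)).re) * r
      + (τ (star b * b)).re := by
    intro r
    have h := aux_re τ hτ ((r : ℂ) • a + b)
    rw [aux_expand] at h
    have hre : (τ (star a * b)).re = (τ (star b * a)).re := by
      rw [aux_herm τ hτ a b]; simp
    have ha := aux_im τ hτ a
    have hb := aux_im τ hτ b
    simp only [Complex.add_re, Complex.mul_re, Complex.mul_im, Complex.conj_re, Complex.conj_im,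
      Complex.ofReal_re, Complex.ofReal_im, ha, hb] at h
    rw [← hre] at h
    nlinarith [h]
  have := discrim_le_zero key
  rw [discrim] at this
  nlinarith [this]

lemma aux_cs (τ : A →L[ℂ] ℂ) (hτ : ∀ a : A, 0 ≤ τ (star a * a)) (a b : A) :
    ‖τ (star a * b)‖ ^ 2 ≤ (τ (star a * a)).re * (τ (star b * b)).re := by
  by_cases hW : τ (star a * b) = 0
  · rw [hW]
    simpa using mul_nonneg (aux_re τ hτ a) (aux_re τ hτ b)
  · set W := τ (star a * b) with hWdef
    set c : ℂ := W / ‖W‖ with hc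
    have hnW : (‖W‖ : ℝ) ≠ 0 := norm_ne_zero_iff.mpr hW
    have hcW : starRingEnd ℂ c * W = (‖W‖ : ℂ) := by
      rw [hc, map_div₀, Complex.conj_ofReal, div_mul_eq_mul_div, RCLike.conj_mul, sq]
      field_simp
      rfl
    have hc1 : ‖c‖ = 1 := by
      rw [hc, norm_div]
      simp only [Complex.norm_real, Real.norm_eq_abs, abs_of_nonneg (norm_nonneg W)]
      exact div_self hnW
    have hcc : starRingEnd ℂ c * c = 1 := by
      rw [RCLike.conj_mul, hc1]
      norm_num
    have h := aux_cs_re τ hτ (c • a) b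
    simp only [star_smul, smul_mul_assoc, mul_smul_comm, map_smul, smul_smul, smul_eq_mul,
      Complex.star_def] at h
    rw [mul_comm c _, hcc, one_mul, hcW] at h
    simpa using h

lemma aux_sq_le [PartialOrder A] [StarOrderedRing A] (e : A) (he : 0 ≤ e) (he1 : ‖e‖ ≤ 1) : e * e ≤ e := by
  have hsa : IsSelfAdjoint e := he.isSelfAdjoint
  rw [← Unitization.inr_le_iff (e * e) e (by simp [IsSelfAdjoint, star_mul, hsa.star_eq]) hsa, Unitization.inr_mul]
  have h0 : (0 : Unitization ℂ A) ≤ e := Unitization.inr_nonneg_iff.mpr he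
  have h1 : (e : Unitization ℂ A) ≤ 1 := by
    rw [← CStarAlgebra.norm_le_one_iff_of_nonneg _ h0, Unitization.norm_inr]
    exact he1
  simpa [pow_two] using CStarAlgebra.pow_antitone h0 h1 (one_le_two)

lemma aux_conj_le [PartialOrder A] [StarOrderedRing A] (e f : A) (he : 0 ≤ e) (hf : 0 ≤ f) (hf1 : ‖f‖ ≤ 1) :
    (f - e * f) * (f - f * e) ≤ f - e * f - f * e + e * f * e := by
  have hesa : IsSelfAdjoint e := he.isSelfAdjoint
  have hfsa : IsSelfAdjoint f := hf.isSelfAdjoint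
  have hL : IsSelfAdjoint ((f - e * f) * (f - f * e)) := by
    have : star (f - f * e) = f - e * f := by
      simp [star_sub, star_mul, hesa.star_eq, hfsa.star_eq]
    rw [← this]
    exact IsSelfAdjoint.star_mul_self _
  have hR : IsSelfAdjoint (f - e * f - f * e + e * f * e) := by
    rw [IsSelfAdjoint]
    simp only [star_add, star_sub, star_mul, hesa.star_eq, hfsa.star_eq, mul_assoc]
    abel
  rw [← Unitization.inr_le_iff _ _ hL hR]
  have h0 : (0 : Unitization ℂ A) ≤ f := Unitization.inr_nonneg_iff.mpr hf
  have h1 : (f : Unitization ℂ A) ≤ 1 := by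
    rw [← CStarAlgebra.norm_le_one_iff_of_nonneg _ h0, Unitization.norm_inr]
    exact hf1
  have hff : (f : Unitization ℂ A) * f ≤ f := by
    simpa [pow_two] using CStarAlgebra.pow_antitone h0 h1 (one_le_two)
  set u : Unitization ℂ A := 1 - (e : Unitization ℂ A) with hu
  have husa : star u = u := by
    simp [hu, star_sub, ← Unitization.inr_star, hesa.star_eq]
  have key : u * ((f : Unitization ℂ A) * f) * u ≤ u * (f : Unitization ℂ A) * u := by
    have := star_left_conjugate_le_conjugate hff u
    rw [husa] at this
    calc u * ((f : Unitization ℂ A) * f) * u = u * ((f : Unitization ℂ A) * f) * u := rfl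
    _ ≤ u * (f : Unitization ℂ A) * u := this
  have hLe : ((((f - e * f) * (f - f * e)) : A) : Unitization ℂ A) =
      u * ((f : Unitization ℂ A) * f) * u := by
    simp only [hu, Unitization.inr_mul, Unitization.inr_sub]
    noncomm_ring
  have hRe : (((f - e * f - f * e + e * f * e) : A) : Unitization ℂ A) =
      u * (f : Unitization ℂ A) * u := by
    simp only [hu, Unitization.inr_mul, Unitization.inr_sub, Unitization.inr_add]
    noncomm_ring
  rw [hLe, hRe]
  exact key

section WithOrder
variable [PartialOrder A] [StarOrderedRing A]

lemma aux_normsq (τ : A →L[ℂ] ℂ) (hτ : ∀ a : A, 0 ≤ τ (star a * a)) (y : A) :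
    ‖τ y‖ ^ 2 ≤ ‖τ‖ * (τ (star y * y)).re := by
  have hl := CStarAlgebra.increasingApproximateUnit A
  haveI : (CStarAlgebra.approximateUnit A).NeBot := hl.toIsApproximateUnit.neBot
  set l := CStarAlgebra.approximateUnit A with hldef
  have hev : ∀ᶠ f in l, ‖τ (f * y)‖ ^ 2 ≤ ‖τ‖ * (τ (star y * y)).re := by
    filter_upwards [hl.eventually_nonneg, hl.eventually_norm] with f hf hfn
    have hfsa : star f = f := hf.isSelfAdjoint.star_eq
    calc ‖τ (f * y)‖ ^ 2 = ‖τ (star f * y)‖ ^ 2 := by rw [hfsa]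
    _ ≤ (τ (star f * f)).re * (τ (star y * y)).re := aux_cs τ hτ f y
    _ ≤ ‖τ‖ * (τ (star y * y)).re := by
        refine mul_le_mul_of_nonneg_right ?_ (aux_re τ hτ y)
        calc (τ (star f * f)).re ≤ ‖τ (star f * f)‖ := Complex.re_le_norm _
        _ ≤ ‖τ‖ * ‖star f * f‖ := τ.le_opNorm _
        _ ≤ ‖τ‖ * 1 := by
            refine mul_le_mul_of_nonneg_left ?_ (norm_nonneg τ)
            rw [CStarRing.norm_star_mul_self]
            exact mul_le_one₀ hfn (norm_nonneg f) hfn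
        _ = ‖τ‖ := mul_one _
  have ht : Filter.Tendsto (fun f => ‖τ (f * y)‖ ^ 2) l (nhds (‖τ y‖ ^ 2)) :=
    (((τ.continuous.tendsto y).comp (hl.tendsto_mul_right y)).norm).pow 2
  exact le_of_tendsto ht hev

lemma aux_key (τ : A →L[ℂ] ℂ) (hτ : ∀ a : A, 0 ≤ τ (star a * a)) (e a : A)
    (he : 0 ≤ e) (he1 : ‖e‖ ≤ 1) :
    ‖τ a - τ (e * a)‖ ^ 2 ≤ (‖τ‖ - (τ e).re) * (τ (star a * a)).re := by
  have hee : (τ (e * e)).re ≤ (τ e).re := aux_mono τ hτ (aux_sq_le e he he1)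
  have hesa : star e = e := he.isSelfAdjoint.star_eq
  suffices h : ‖τ a - τ (e * a)‖ ^ 2 ≤
      (‖τ‖ - (τ e).re - (τ e).re + (τ (e * e)).re) * (τ (star a * a)).re by
    refine h.trans (mul_le_mul_of_nonneg_right (by linarith) (aux_re τ hτ a))
  have hl := CStarAlgebra.increasingApproximateUnit A
  haveI : (CStarAlgebra.approximateUnit A).NeBot := hl.toIsApproximateUnit.neBot
  set l := CStarAlgebra.approximateUnit A with hldef
  have hev : ∀ᶠ f in l, ‖τ (f * a) - τ (e * (f * a))‖ ^ 2 ≤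
      (‖τ‖ - (τ (e * f)).re - (τ (f * e)).re + (τ (e * f * e)).re) * (τ (star a * a)).re := by
    filter_upwards [hl.eventually_nonneg, hl.eventually_norm] with f hf hfn
    have hfsa : star f = f := hf.isSelfAdjoint.star_eq
    have h1 : τ (f * a) - τ (e * (f * a)) = τ (star (f - f * e) * a) := by
      rw [star_sub, star_mul, hfsa, hesa, sub_mul, map_sub, mul_assoc]
    calc ‖τ (f * a) - τ (e * (f * a))‖ ^ 2
        = ‖τ (star (f - f * e) * a)‖ ^ 2 := by rw [h1]
    _ ≤ (τ (star (f - f * e) * (f - f * e))).re * (τ (star a * a)).re :=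
        aux_cs τ hτ (f - f * e) a
    _ ≤ (‖τ‖ - (τ (e * f)).re - (τ (f * e)).re + (τ (e * f * e)).re) * (τ (star a * a)).re := by
        refine mul_le_mul_of_nonneg_right ?_ (aux_re τ hτ a)
        have hst : star (f - f * e) = f - e * f := by
          rw [star_sub, star_mul, hfsa, hesa]
        rw [hst]
        refine (aux_mono τ hτ (aux_conj_le e f he hf hfn)).trans ?_
        have : τ (f - e * f - f * e + e * f * e)
            = τ f - τ (e * f) - τ (f * e) + τ (e * f * e) := by
          simp [map_sub, map_add]
        rw [this]
        simp only [Complex.add_re, Complex.sub_re]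
        have : (τ f).re ≤ ‖τ‖ := by
          calc (τ f).re ≤ ‖τ f‖ := Complex.re_le_norm _
          _ ≤ ‖τ‖ * ‖f‖ := τ.le_opNorm _
          _ ≤ ‖τ‖ * 1 := mul_le_mul_of_nonneg_left hfn (norm_nonneg τ)
          _ = ‖τ‖ := mul_one _
        linarith
  have hG : Filter.Tendsto (fun f => ‖τ (f * a) - τ (e * (f * a))‖ ^ 2) l
      (nhds (‖τ a - τ (e * a)‖ ^ 2)) := by
    have T0 : Filter.Tendsto (fun f : A => f * a) l (nhds a) := hl.tendsto_mul_right a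
    have T1 : Filter.Tendsto (fun f : A => τ (f * a)) l (nhds (τ a)) :=
      (τ.continuous.tendsto a).comp T0
    have T2 : Filter.Tendsto (fun f : A => τ (e * (f * a))) l (nhds (τ (e * a))) :=
      (τ.continuous.tendsto (e * a)).comp (((continuous_mul_left e).tendsto a).comp T0)
    exact ((T1.sub T2).norm).pow 2
  have hH : Filter.Tendsto
      (fun f => (‖τ‖ - (τ (e * f)).re - (τ (f * e)).re + (τ (e * f * e)).re)
        * (τ (star a * a)).re) l
      (nhds ((‖τ‖ - (τ e).re - (τ e).re + (τ (e * e)).re) * (τ (star a * a)).re)) := by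
    have Tef : Filter.Tendsto (fun f : A => e * f) l (nhds e) := hl.tendsto_mul_left e
    have Tfe : Filter.Tendsto (fun f : A => f * e) l (nhds e) := hl.tendsto_mul_right e
    have Tefe : Filter.Tendsto (fun f : A => e * f * e) l (nhds (e * e)) :=
      ((continuous_mul_right e).tendsto e).comp Tef
    have r1 : Filter.Tendsto (fun f : A => (τ (e * f)).re) l (nhds ((τ e).re)) :=
      (Complex.continuous_re.tendsto _).comp ((τ.continuous.tendsto e).comp Tef)
    have r2 : Filter.Tendsto (fun f : A => (τ (f * e)).re) l (nhds ((τ e).re)) :=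
      (Complex.continuous_re.tendsto _).comp ((τ.continuous.tendsto e).comp Tfe)
    have r3 : Filter.Tendsto (fun f : A => (τ (e * f * e)).re) l (nhds ((τ (e * e)).re)) :=
      (Complex.continuous_re.tendsto _).comp ((τ.continuous.tendsto (e * e)).comp Tefe)
    exact (((tendsto_const_nhds.sub r1).sub r2).add r3).mul tendsto_const_nhds
  exact le_of_tendsto_of_tendsto hG hH hev

end WithOrder

end AuxHelpers

/-- If `τ` is a positive tracial functional on a C*-algebra `A` that is the
norm-preserving extension of a positive linear functional on a closed two-sided ideal
`I`, then for every closed two-sided ideal `J`, `‖τ|_J‖ = ‖τ|_{J ∩ I}‖`. -/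
theorem restriction_norm_eq_inter
    {A : Type*} [NonUnitalNormedRing A] [StarRing A] [CStarRing A]
    [NormedSpace ℂ A] [IsScalarTower ℂ A A] [SMulCommClass ℂ A A]
    [StarModule ℂ A] [CompleteSpace A]
    (I : Submodule ℂ A) (hIc : IsClosed (I : Set A))
    (hIl : ∀ a ∈ I, ∀ b : A, b * a ∈ I)
    (hIr : ∀ a ∈ I, ∀ b : A, a * b ∈ I)
    (J : Submodule ℂ A) (hJc : IsClosed (J : Set A))
    (hJl : ∀ a ∈ J, ∀ b : A, b * a ∈ J)
    (hJr : ∀ a ∈ J, ∀ b : A, a * b ∈ J)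
    (τ0 : I →L[ℂ] ℂ)
    (hτ0pos : ∀ (x : A) (hx : x ∈ I), 0 ≤ τ0 ⟨star x * x, hIl x hx (star x)⟩)
    (τ : A →L[ℂ] ℂ)
    (hτpos : ∀ a : A, 0 ≤ τ (star a * a))
    (hτtr : ∀ a b : A, τ (a * b) = τ (b * a))
    (hext : ∀ x : I, τ (x : A) = τ0 x)
    (hnorm : ‖τ‖ = ‖τ0‖) :
    ‖τ.comp J.subtypeL‖ = ‖τ.comp (J ⊓ I).subtypeL‖ := by
  letI : NonUnitalCStarAlgebra A :=
    { ‹NonUnitalNormedRing A›, ‹StarRing A›, ‹CStarRing A›, ‹NormedSpace ℂ A›,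
      ‹IsScalarTower ℂ A A›, ‹SMulCommClass ℂ A A›, ‹StarModule ℂ A›, ‹CompleteSpace A› with }
  letI : PartialOrder A :=
    PartialOrder.lift (fun a : A => (a : Unitization ℂ A)) Unitization.inr_injective
  haveI : StarOrderedRing A := by
    refine StarOrderedRing.of_nonneg_iff' (fun {x y} hxy z => ?_) (fun x => ?_)
    · show ((z + x : A) : Unitization ℂ A) ≤ ((z + y : A) : Unitization ℂ A)
      rw [Unitization.inr_add, Unitization.inr_add]
      have hxy' : (x : Unitization ℂ A) ≤ (y : Unitization ℂ A) := hxy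
      exact add_le_add_right hxy' _
    · constructor
      · intro hx
        have hx' : (0 : Unitization ℂ A) ≤ (x : Unitization ℂ A) := by
          have : ((0 : A) : Unitization ℂ A) ≤ (x : Unitization ℂ A) := hx
          simpa using this
        have hsa : IsSelfAdjoint x := by
          have : IsSelfAdjoint (x : Unitization ℂ A) := hx'.isSelfAdjoint
          rw [IsSelfAdjoint, ← Unitization.inr_star] at this
          exact Unitization.inr_injective this
        refine aux_exists_sqrt x hsa fun t ht => ?_
        rw [Unitization.quasispectrum_eq_spectrum_inr' ℝ ℂ x] at ht
        exact spectrum_nonneg_of_nonneg hx' ht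
      · rintro ⟨s, rfl⟩
        show ((0 : A) : Unitization ℂ A) ≤ ((star s * s : A) : Unitization ℂ A)
        rw [Unitization.inr_zero, Unitization.inr_mul, Unitization.inr_star]
        exact star_mul_self_nonneg _
  -- easy inequality
  have easy : ‖τ.comp (J ⊓ I).subtypeL‖ ≤ ‖τ.comp J.subtypeL‖ := by
    refine ContinuousLinearMap.opNorm_le_bound _ (ContinuousLinearMap.opNorm_nonneg _) fun z => ?_
    have : (τ.comp (J ⊓ I).subtypeL) z = (τ.comp J.subtypeL) ⟨(z : A), z.2.1⟩ := by simp
    rw [this]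
    calc ‖(τ.comp J.subtypeL) ⟨(z : A), z.2.1⟩‖
        ≤ ‖τ.comp J.subtypeL‖ * ‖(⟨(z : A), z.2.1⟩ : J)‖ := (τ.comp J.subtypeL).le_opNorm _
    _ = ‖τ.comp J.subtypeL‖ * ‖z‖ := rfl
  -- step 2: near-norm positive elements of I
  have step2 : ∀ δ : ℝ, 0 < δ → ∃ e : A, e ∈ I ∧ 0 ≤ e ∧ ‖e‖ ≤ 1 ∧ ‖τ‖ - δ ≤ (τ e).re := by
    intro δ hδ
    rcases le_or_gt ‖τ‖ δ with h | h
    · refine ⟨0, zero_mem I, le_refl 0, by simp, ?_⟩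
      simp only [map_zero, Complex.zero_re]
      linarith
    · have hτpos' : (0:ℝ) < ‖τ‖ := lt_trans hδ h
      obtain ⟨x, hx1, hx2⟩ := τ0.exists_lt_apply_of_lt_opNorm (r := ‖τ‖ - δ/2)
        (by rw [← hnorm]; linarith)
      set y : A := (x : A) with hy
      have hyI : y ∈ I := x.2
      have hτy : τ y = τ0 x := hext x
      have hyn : ‖y‖ ≤ 1 := by
        have : ‖y‖ = ‖x‖ := rfl
        rw [this]; exact hx1.le
      refine ⟨star y * y, hIl y hyI (star y), star_mul_self_nonneg y, ?_, ?_⟩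
      · rw [CStarRing.norm_star_mul_self]
        exact mul_le_one₀ hyn (norm_nonneg y) hyn
      · have hns := aux_normsq τ hτpos y
        have hy2 : ‖τ‖ - δ/2 < ‖τ y‖ := by rw [hτy]; exact hx2
        nlinarith [norm_nonneg (τ y), hns]
  -- hard inequality
  have hard : ‖τ.comp J.subtypeL‖ ≤ ‖τ.comp (J ⊓ I).subtypeL‖ := by
    refine le_of_forall_pos_le_add fun κ hκ => ?_
    set δ : ℝ := κ^2 / (‖τ‖ + 1) with hδdef
    have hδ : 0 < δ := div_pos (by positivity) (by positivity)
    obtain ⟨e, heI, hepos, hen, here⟩ := step2 δ hδ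
    refine ContinuousLinearMap.opNorm_le_bound _ (add_nonneg (ContinuousLinearMap.opNorm_nonneg _) hκ.le) fun z => ?_
    set a : A := (z : A) with ha
    have haJ : a ∈ J := z.2
    have hza : ‖(z : ↥J)‖ = ‖a‖ := rfl
    have happ : (τ.comp J.subtypeL) z = τ a := by simp [ha]
    rw [happ, hza]
    -- the element a * e lies in J ⊓ I
    have haeJI : a * e ∈ J ⊓ I := ⟨hJr a haJ e, hIl e heI a⟩
    have hterm1 : ‖τ (a * e)‖ ≤ ‖τ.comp (J ⊓ I).subtypeL‖ * ‖a‖ := by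
      have : τ (a * e) = (τ.comp (J ⊓ I).subtypeL) ⟨a * e, haeJI⟩ := by simp
      rw [this]
      calc ‖(τ.comp (J ⊓ I).subtypeL) ⟨a * e, haeJI⟩‖
          ≤ ‖τ.comp (J ⊓ I).subtypeL‖ * ‖a * e‖ := by
            have := (τ.comp (J ⊓ I).subtypeL).le_opNorm (⟨a * e, haeJI⟩ : ↥(J ⊓ I))
            simpa using this
      _ ≤ ‖τ.comp (J ⊓ I).subtypeL‖ * (‖a‖ * ‖e‖) :=
          mul_le_mul_of_nonneg_left (norm_mul_le a e) (ContinuousLinearMap.opNorm_nonneg _)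
      _ ≤ ‖τ.comp (J ⊓ I).subtypeL‖ * (‖a‖ * 1) := by
          refine mul_le_mul_of_nonneg_left ?_ (ContinuousLinearMap.opNorm_nonneg _)
          exact mul_le_mul_of_nonneg_left hen (norm_nonneg a)
      _ = ‖τ.comp (J ⊓ I).subtypeL‖ * ‖a‖ := by rw [mul_one]
    have hterm2 : ‖τ a - τ (e * a)‖ ≤ κ * ‖a‖ := by
      have hkey := aux_key τ hτpos e a hepos hen
      have h1 : (τ (star a * a)).re ≤ ‖τ‖ * ‖a‖^2 := by
        calc (τ (star a * a)).re ≤ ‖τ (star a * a)‖ := Complex.re_le_norm _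
        _ ≤ ‖τ‖ * ‖star a * a‖ := τ.le_opNorm _
        _ = ‖τ‖ * (‖a‖ * ‖a‖) := by rw [CStarRing.norm_star_mul_self]
        _ = ‖τ‖ * ‖a‖^2 := by ring
      have h2 : ‖τ‖ - (τ e).re ≤ δ := by linarith
      have h3 : (0:ℝ) ≤ ‖τ‖ - (τ e).re := by
        have : (τ e).re ≤ ‖τ‖ := by
          calc (τ e).re ≤ ‖τ e‖ := Complex.re_le_norm _
          _ ≤ ‖τ‖ * ‖e‖ := τ.le_opNorm _
          _ ≤ ‖τ‖ * 1 := mul_le_mul_of_nonneg_left hen (norm_nonneg τ)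
          _ = ‖τ‖ := mul_one _
        linarith
      have h4 : (0:ℝ) ≤ (τ (star a * a)).re := aux_re τ hτpos a
      have hsq : ‖τ a - τ (e * a)‖^2 ≤ (κ * ‖a‖)^2 := by
        have hδτ : δ * ‖τ‖ ≤ κ^2 := by
          rw [hδdef, div_mul_eq_mul_div, div_le_iff₀ (by positivity)]
          nlinarith [norm_nonneg τ, sq_nonneg κ]
        calc ‖τ a - τ (e * a)‖^2 ≤ (‖τ‖ - (τ e).re) * (τ (star a * a)).re := hkey
        _ ≤ δ * (‖τ‖ * ‖a‖^2) := by
            apply mul_le_mul h2 h1 h4 hδ.le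
        _ = (δ * ‖τ‖) * ‖a‖^2 := by ring
        _ ≤ κ^2 * ‖a‖^2 := mul_le_mul_of_nonneg_right hδτ (sq_nonneg _)
        _ = (κ * ‖a‖)^2 := by ring
      calc ‖τ a - τ (e * a)‖ = Real.sqrt (‖τ a - τ (e * a)‖^2) :=
            (Real.sqrt_sq (norm_nonneg _)).symm
      _ ≤ Real.sqrt ((κ * ‖a‖)^2) := Real.sqrt_le_sqrt hsq
      _ = κ * ‖a‖ := Real.sqrt_sq (by positivity)
    calc ‖τ a‖ ≤ ‖τ (a * e)‖ + ‖τ a - τ (a * e)‖ := by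
          calc ‖τ a‖ = ‖τ (a * e) + (τ a - τ (a * e))‖ := by congr 1; ring
          _ ≤ ‖τ (a * e)‖ + ‖τ a - τ (a * e)‖ := norm_add_le _ _
    _ = ‖τ (a * e)‖ + ‖τ a - τ (e * a)‖ := by rw [hτtr a e]
    _ ≤ ‖τ.comp (J ⊓ I).subtypeL‖ * ‖a‖ + κ * ‖a‖ := add_le_add hterm1 hterm2
    _ = (‖τ.comp (J ⊓ I).subtypeL‖ + κ) * ‖a‖ := by ring
  exact le_antisymm hard easy
end

section
/- Let (A, G, {I_g}, {θ_g}) be a partial dynamical system and let I, J be G-invariant closed two-sided ideals of A (i.e., θ_g(I ∩ I_{g⁻¹}) ⊆ I for all g, and similarly for J). Then inside A ⋊ G, the ideals satisfy (I ⋊ G) ∩ (J ⋊ G) = (I ∩ J) ⋊ G. -/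
/-!
An element `x` of the closed left ideal `J ⋊ G` of the C*-algebra `A ⋊ G` is a limit of products
`x b` with `b ∈ J ⋊ G`. If moreover `x ∈ I ⋊ G`, each `x b` lies in `(I ∩ J) ⋊ G`: the coefficient
`θ_g (θ_g⁻¹(a) b)` of a product of generators `(a δ_g) (b δ_h)` with `a ∈ I`, `b ∈ J` lies in
`I` because `I` is an invariant right ideal and in `J` because `J` is an invariant left ideal.
-/

open scoped ComplexOrder

/-- A partial dynamical system: a partial action of a group `G` on a C*-algebra `A`
by *-isomorphisms `θ g : I g⁻¹ → I g` between closed two-sided ideals. -/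
structure PartialDynSys (G : Type*) [Group G] (A : Type*)
    [NonUnitalNormedRing A] [StarRing A] [CStarRing A]
    [NormedSpace ℂ A] [IsScalarTower ℂ A A] [SMulCommClass ℂ A A]
    [StarModule ℂ A] [CompleteSpace A] where
  I : G → Submodule ℂ A
  closed : ∀ g, IsClosed ((I g : Set A))
  ideal_left : ∀ g, ∀ a ∈ I g, ∀ b : A, b * a ∈ I g
  ideal_right : ∀ g, ∀ a ∈ I g, ∀ b : A, a * b ∈ I g
  θ : G → A → A
  bijOn : ∀ g, Set.BijOn (θ g) ((I g⁻¹ : Submodule ℂ A) : Set A) ((I g : Submodule ℂ A) : Set A)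
  map_add : ∀ g, ∀ a ∈ I g⁻¹, ∀ b ∈ I g⁻¹, θ g (a + b) = θ g a + θ g b
  map_smul : ∀ g, ∀ c : ℂ, ∀ a ∈ I g⁻¹, θ g (c • a) = c • θ g a
  map_mul : ∀ g, ∀ a ∈ I g⁻¹, ∀ b ∈ I g⁻¹, θ g (a * b) = θ g a * θ g b
  map_star : ∀ g, ∀ a ∈ I g⁻¹, θ g (star a) = star (θ g a)
  one : ∀ a : A, θ 1 a = a
  compat : ∀ g h : G, ∀ a ∈ I g⁻¹, θ g a ∈ I h⁻¹ →
    a ∈ I (h * g)⁻¹ ∧ θ (h * g) a = θ h (θ g a)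

/-- A covariant representation of a partial dynamical system in a C*-algebra `C`:
maps `γ g : I g → C` satisfying the algebraic relations of the partial crossed
product (`γ g a` corresponds to `a δ_g`). -/
def CovariantRep {G : Type*} [Group G] {A : Type*}
    [NonUnitalNormedRing A] [StarRing A] [CStarRing A]
    [NormedSpace ℂ A] [IsScalarTower ℂ A A] [SMulCommClass ℂ A A]
    [StarModule ℂ A] [CompleteSpace A]
    (P : PartialDynSys G A) (C : Type*)
    [NonUnitalNormedRing C] [StarRing C] [CStarRing C]
    [NormedSpace ℂ C] [IsScalarTower ℂ C C] [SMulCommClass ℂ C C]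
    [StarModule ℂ C] [CompleteSpace C]
    (γ : G → A → C) : Prop :=
  (∀ g, ∀ a ∈ P.I g, ∀ b ∈ P.I g, γ g (a + b) = γ g a + γ g b) ∧
  (∀ g, ∀ c : ℂ, ∀ a ∈ P.I g, γ g (c • a) = c • γ g a) ∧
  (∀ g h : G, ∀ a ∈ P.I g, ∀ b ∈ P.I h,
    γ g a * γ h b = γ (g * h) (P.θ g (P.θ g⁻¹ a * b))) ∧
  (∀ g, ∀ a ∈ P.I g, star (γ g a) = γ g⁻¹ (P.θ g⁻¹ (star a)))

/-- `B`, together with the maps `δ g : I g → B` (`δ g a` corresponding to `a δ_g`),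
is the (full) partial crossed product of the partial dynamical system `P`: it is a
covariant representation which is nondegenerate (dense span), faithful on `A`, and
universal among covariant representations. -/
structure IsPartialCrossedProduct {G : Type*} [Group G] {A : Type*}
    [NonUnitalNormedRing A] [StarRing A] [CStarRing A]
    [NormedSpace ℂ A] [IsScalarTower ℂ A A] [SMulCommClass ℂ A A]
    [StarModule ℂ A] [CompleteSpace A]
    (P : PartialDynSys G A) (B : Type*)
    [NonUnitalNormedRing B] [StarRing B] [CStarRing B]
    [NormedSpace ℂ B] [IsScalarTower ℂ B B] [SMulCommClass ℂ B B]
    [StarModule ℂ B] [CompleteSpace B]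
    (δ : G → A → B) : Prop where
  covariant : CovariantRep P B δ
  faithful : ∀ a : A, δ 1 a = 0 → a = 0
  dense_span : Dense ((Submodule.span ℂ {b : B | ∃ g, ∃ a ∈ P.I g, b = δ g a} : Submodule ℂ B) : Set B)
  universal : ∀ (C : Type) (_ : NonUnitalNormedRing C) (_ : StarRing C)
    (_ : CStarRing C) (_ : NormedSpace ℂ C) (_ : IsScalarTower ℂ C C)
    (_ : SMulCommClass ℂ C C) (_ : StarModule ℂ C) (_ : CompleteSpace C)
    (γ : G → A → C), CovariantRep P C γ →
    ∃ φ : B → C, Continuous φ ∧ (∀ x y : B, φ (x + y) = φ x + φ y) ∧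
      (∀ (c : ℂ) (x : B), φ (c • x) = c • φ x) ∧
      (∀ x y : B, φ (x * y) = φ x * φ y) ∧
      (∀ x : B, φ (star x) = star (φ x)) ∧
      ∀ g, ∀ a ∈ P.I g, φ (δ g a) = γ g a

/-- The closed ideal `K ⋊ G` of `A ⋊ G` associated to a `G`-invariant closed
two-sided ideal `K` of `A`: the closed span of `{a δ_g : a ∈ K ∩ I_g}`. -/
def idealCrossedProduct {G : Type*} [Group G] {A : Type*}
    [NonUnitalNormedRing A] [StarRing A] [CStarRing A]
    [NormedSpace ℂ A] [IsScalarTower ℂ A A] [SMulCommClass ℂ A A]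
    [StarModule ℂ A] [CompleteSpace A]
    (P : PartialDynSys G A)
    {B : Type*} [NonUnitalNormedRing B] [StarRing B] [CStarRing B]
    [NormedSpace ℂ B] [IsScalarTower ℂ B B] [SMulCommClass ℂ B B]
    [StarModule ℂ B] [CompleteSpace B]
    (δ : G → A → B) (K : Submodule ℂ A) : Submodule ℂ B :=
  (Submodule.span ℂ {b : B | ∃ g, ∃ a ∈ K ⊓ P.I g, b = δ g a}).topologicalClosure

namespace PartialDynSys

variable {G : Type*} [Group G] {A : Type*}
    [NonUnitalNormedRing A] [StarRing A] [CStarRing A]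
    [NormedSpace ℂ A] [IsScalarTower ℂ A A] [SMulCommClass ℂ A A]
    [StarModule ℂ A] [CompleteSpace A] (P : PartialDynSys G A)

def IsInvariant (K : Submodule ℂ A) : Prop :=
  ∀ g : G, ∀ a ∈ K, a ∈ P.I g⁻¹ → P.θ g a ∈ K

variable {P}

theorem θ_mem {g : G} {a : A} (ha : a ∈ P.I g⁻¹) : P.θ g a ∈ P.I g :=
  (P.bijOn g).mapsTo ha

theorem θ_inv_mem {g : G} {a : A} (ha : a ∈ P.I g) : P.θ g⁻¹ a ∈ P.I g⁻¹ :=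
  θ_mem (by rwa [inv_inv])

theorem θ_inv_θ {g : G} {a : A} (ha : a ∈ P.I g⁻¹) : P.θ g⁻¹ (P.θ g a) = a := by
  have h := (P.compat g g⁻¹ a ha (by rw [inv_inv]; exact θ_mem ha)).2
  rwa [inv_mul_cancel, P.one, eq_comm] at h

theorem θ_mem_mul {g h : G} {a : A} (hg : a ∈ P.I g⁻¹) (hh : a ∈ P.I h) :
    P.θ g a ∈ P.I (g * h) := by
  have h₁ : P.θ g a ∈ P.I g⁻¹⁻¹ := by rw [inv_inv]; exact θ_mem hg
  have h₂ : P.θ g⁻¹ (P.θ g a) ∈ P.I h⁻¹⁻¹ := by rwa [inv_inv, θ_inv_θ hg]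
  simpa using (P.compat g⁻¹ h⁻¹ _ h₁ h₂).1

-- `θ g (θ g⁻¹ a * b)` is the coefficient in `(a δ_g) (b δ_h) = θ_g (θ_g⁻¹(a) b) δ_gh`.
theorem θ_θ_inv_mul_mem_I_mul {g h : G} {a b : A} (ha : a ∈ P.I g) (hb : b ∈ P.I h) :
    P.θ g (P.θ g⁻¹ a * b) ∈ P.I (g * h) :=
  θ_mem_mul (P.ideal_right g⁻¹ _ (θ_inv_mem ha) b) (P.ideal_left h b hb _)

theorem θ_θ_inv_mul_mem_of_mem_right {K : Submodule ℂ A} (hKl : ∀ a ∈ K, ∀ b : A, b * a ∈ K)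
    (hK : P.IsInvariant K) {g : G} {a b : A} (ha : a ∈ P.I g) (hb : b ∈ K) :
    P.θ g (P.θ g⁻¹ a * b) ∈ K :=
  hK g _ (hKl b hb _) (P.ideal_right g⁻¹ _ (θ_inv_mem ha) b)

theorem θ_θ_inv_mul_mem_of_mem_left {K : Submodule ℂ A} (hKr : ∀ a ∈ K, ∀ b : A, a * b ∈ K)
    (hK : P.IsInvariant K) {g : G} {a : A} (b : A) (ha : a ∈ P.I g) (haK : a ∈ K) :
    P.θ g (P.θ g⁻¹ a * b) ∈ K :=
  hK g _ (hKr _ (hK g⁻¹ a haK (by rwa [inv_inv])) b) (P.ideal_right g⁻¹ _ (θ_inv_mem ha) b)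

end PartialDynSys

section idealCrossedProduct

variable {G : Type*} [Group G] {A : Type*}
    [NonUnitalNormedRing A] [StarRing A] [CStarRing A]
    [NormedSpace ℂ A] [IsScalarTower ℂ A A] [SMulCommClass ℂ A A]
    [StarModule ℂ A] [CompleteSpace A] {P : PartialDynSys G A}
    {B : Type*} [NonUnitalNormedRing B] [StarRing B] [CStarRing B]
    [NormedSpace ℂ B] [IsScalarTower ℂ B B] [SMulCommClass ℂ B B]
    [StarModule ℂ B] [CompleteSpace B] {δ : G → A → B}

theorem isClosed_idealCrossedProduct (K : Submodule ℂ A) :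
    IsClosed (idealCrossedProduct P δ K : Set B) :=
  Submodule.isClosed_topologicalClosure _

theorem idealCrossedProduct_mono {K K' : Submodule ℂ A} (h : K ≤ K') :
    idealCrossedProduct P δ K ≤ idealCrossedProduct P δ K' := by
  refine Submodule.topologicalClosure_mono (Submodule.span_mono ?_)
  rintro _ ⟨g, a, ha, rfl⟩
  exact ⟨g, a, inf_le_inf_right _ h ha, rfl⟩

theorem idealCrossedProduct_top (hB : IsPartialCrossedProduct P B δ) :
    idealCrossedProduct P δ ⊤ = ⊤ := by
  simpa only [idealCrossedProduct, top_inf_eq] using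
    Submodule.dense_iff_topologicalClosure_eq_top.mp hB.dense_span

theorem mul_mem_idealCrossedProduct (hδ : CovariantRep P B δ) {K₁ K₂ K : Submodule ℂ A}
    (hK : ∀ g h : G, ∀ a b : A, a ∈ K₁ → a ∈ P.I g → b ∈ K₂ → b ∈ P.I h →
      P.θ g (P.θ g⁻¹ a * b) ∈ K)
    {u v : B} (hu : u ∈ idealCrossedProduct P δ K₁) (hv : v ∈ idealCrossedProduct P δ K₂) :
    u * v ∈ idealCrossedProduct P δ K := by
  rw [← SetLike.mem_coe, ← (isClosed_idealCrossedProduct K).closure_eq]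
  refine map_mem_closure₂ continuous_mul hu hv fun u' hu' v' hv' => ?_
  have hspan : u' * v' ∈ Submodule.span ℂ (Set.image2 (· * ·)
      {b : B | ∃ g, ∃ a ∈ K₁ ⊓ P.I g, b = δ g a} {b : B | ∃ g, ∃ a ∈ K₂ ⊓ P.I g, b = δ g a}) := by
    have h := Submodule.apply_mem_map₂ (LinearMap.mul ℂ B) hu' hv'
    rwa [Submodule.map₂_span_span] at h
  refine Submodule.le_topologicalClosure _ (Submodule.span_le.mpr ?_ hspan)
  rintro _ ⟨_, ⟨g, a, ⟨haK, hag⟩, rfl⟩, _, ⟨h, b, ⟨hbK, hbh⟩, rfl⟩, rfl⟩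
  show δ g a * δ h b ∈ _
  rw [hδ.2.2.1 g h a hag b hbh]
  exact Submodule.subset_span
    ⟨g * h, _, ⟨hK g h a b haK hag hbK hbh, PartialDynSys.θ_θ_inv_mul_mem_I_mul hag hbh⟩, rfl⟩

theorem idealCrossedProduct_mul_mem_left (hB : IsPartialCrossedProduct P B δ)
    {K : Submodule ℂ A} (hKl : ∀ a ∈ K, ∀ b : A, b * a ∈ K) (hK : P.IsInvariant K)
    (u : B) {v : B} (hv : v ∈ idealCrossedProduct P δ K) : u * v ∈ idealCrossedProduct P δ K :=
  mul_mem_idealCrossedProduct hB.covariant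
    (fun _ _ _ _ _ hag hbK _ => PartialDynSys.θ_θ_inv_mul_mem_of_mem_right hKl hK hag hbK)
    (idealCrossedProduct_top hB ▸ Submodule.mem_top) hv

end idealCrossedProduct

section CStarAlgebra

open scoped ContinuousMapZero

variable {B : Type*} [NonUnitalCStarAlgebra B]

theorem cfcₙ_mem_of_isClosed_of_mul_mem (L : Submodule ℂ B) (hLc : IsClosed (L : Set B))
    (hLl : ∀ y ∈ L, ∀ c : B, c * y ∈ L) {a : B} (ha : IsSelfAdjoint a) (haL : a ∈ L)
    (f : ℝ → ℝ) : cfcₙ f a ∈ L := by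
  by_cases hf : ContinuousOn f (quasispectrum ℝ a) ∧ f 0 = 0
  · rw [cfcₙ_apply f a hf.1 hf.2 ha]
    suffices ∀ g : C(quasispectrum ℝ a, ℝ)₀, cfcₙHom ha g ∈ L from this _
    intro g
    induction g using ContinuousMapZero.induction_on_of_compact with
    | zero => rw [map_zero]; exact L.zero_mem
    | id => rw [cfcₙHom_id ha]; exact haL
    | star_id => rw [map_star, cfcₙHom_id ha, ha.star_eq]; exact haL
    | add u v hu hv => rw [map_add]; exact L.add_mem hu hv
    | mul u v hu hv => rw [map_mul]; exact hLl _ hv _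
    | smul r u hu => rw [map_smul, ← algebraMap_smul ℂ r]; exact L.smul_mem _ hu
    | frequently u hu =>
        exact (hLc.preimage (cfcₙHom_isClosedEmbedding ha).continuous).closure_subset
          (mem_closure_iff_frequently.mpr hu)
  · rcases not_and_or.mp hf with h | h
    · rw [cfcₙ_apply_of_not_continuousOn a h]; exact L.zero_mem
    · rw [cfcₙ_apply_of_not_map_zero a h]; exact L.zero_mem

theorem star_sub_mul_cfcₙ_mul_sub (x : B) {f : ℝ → ℝ} (hf : Continuous f) (hf0 : f 0 = 0) :
    star (x - x * cfcₙ f (star x * x)) * (x - x * cfcₙ f (star x * x)) =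
      cfcₙ (fun t => t * (1 - f t) ^ 2) (star x * x) := by
  set a := star x * x
  have hb : star (cfcₙ f a) = cfcₙ f a := (cfcₙ_predicate f a).star_eq
  have expand : (fun t : ℝ => t * (1 - f t) ^ 2) =
      fun t => t - t * f t - (f t * t - f t * (t * f t)) := by
    funext t; ring
  rw [expand, cfcₙ_sub _ _ a, cfcₙ_sub _ _ a, cfcₙ_sub _ _ a, cfcₙ_mul _ _ a, cfcₙ_mul _ _ a,
    cfcₙ_mul _ _ a, cfcₙ_mul _ _ a, cfcₙ_id' ℝ a]
  simp only [star_sub, star_mul, hb, a]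
  noncomm_ring

theorem abs_mul_one_sub_min_sq_le {η : ℝ} (hη : 0 < η) (t : ℝ) :
    |t| * (1 - min (|t| / η) 1) ^ 2 ≤ η := by
  rcases le_or_gt |t| η with h | h
  · have h0 : 0 ≤ |t| / η := by positivity
    have h1 : |t| / η ≤ 1 := (div_le_one hη).mpr h
    rw [min_eq_left h1]
    calc |t| * (1 - |t| / η) ^ 2 ≤ η * 1 := by
          gcongr
          exact pow_le_one₀ (by linarith) (by linarith)
      _ = η := mul_one η
  · rw [min_eq_right ((one_le_div hη).mpr h.le)]
    simpa using hη.le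

-- `x * f(x⋆x) → x` as `f → 1` on the spectrum, and `f(x⋆x) ∈ L` because `x⋆x ∈ L`.
theorem mem_closure_image_mul_of_isClosed_of_mul_mem (L : Submodule ℂ B)
    (hLc : IsClosed (L : Set B)) (hLl : ∀ y ∈ L, ∀ c : B, c * y ∈ L) {x : B} (hx : x ∈ L) :
    x ∈ closure ((x * ·) '' L) := by
  rw [Metric.mem_closure_iff]
  intro ε hε
  set η := ε ^ 2 / 2
  have hη : 0 < η := by positivity
  set f : ℝ → ℝ := fun t => min (|t| / η) 1
  have hf : Continuous f := by fun_prop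
  set b := cfcₙ f (star x * x)
  have hbL : b ∈ L :=
    cfcₙ_mem_of_isClosed_of_mul_mem L hLc hLl (.star_mul_self x) (hLl x hx _) f
  have hsq : ‖x - x * b‖ ^ 2 ≤ η := by
    rw [sq, ← CStarRing.norm_star_mul_self, star_sub_mul_cfcₙ_mul_sub x hf (by simp [f])]
    refine norm_cfcₙ_le fun t _ => ?_
    rw [norm_mul, norm_pow, Real.norm_eq_abs, Real.norm_eq_abs, sq_abs]
    exact abs_mul_one_sub_min_sq_le hη t
  refine ⟨x * b, ⟨b, hbL, rfl⟩, ?_⟩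
  rw [dist_eq_norm]
  exact lt_of_pow_lt_pow_left₀ 2 hε.le (hsq.trans_lt (half_lt_self (by positivity)))

end CStarAlgebra

theorem idealCrossedProduct_inter_general
    {G : Type*} [Group G] {A : Type*}
    [NonUnitalNormedRing A] [StarRing A] [CStarRing A]
    [NormedSpace ℂ A] [IsScalarTower ℂ A A] [SMulCommClass ℂ A A]
    [StarModule ℂ A] [CompleteSpace A]
    (P : PartialDynSys G A)
    {B : Type*} [NonUnitalNormedRing B] [StarRing B] [CStarRing B]
    [NormedSpace ℂ B] [IsScalarTower ℂ B B] [SMulCommClass ℂ B B]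
    [StarModule ℂ B] [CompleteSpace B]
    (δ : G → A → B) (hB : IsPartialCrossedProduct P B δ)
    (I J : Submodule ℂ A)
    (hIr : ∀ a ∈ I, ∀ b : A, a * b ∈ I)
    (hJl : ∀ a ∈ J, ∀ b : A, b * a ∈ J)
    (hIinv : ∀ g : G, ∀ a ∈ I, a ∈ P.I g⁻¹ → P.θ g a ∈ I)
    (hJinv : ∀ g : G, ∀ a ∈ J, a ∈ P.I g⁻¹ → P.θ g a ∈ J) :
    idealCrossedProduct P δ I ⊓ idealCrossedProduct P δ J =
      idealCrossedProduct P δ (I ⊓ J) := by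
  refine le_antisymm (fun x hx => ?_) (le_inf (idealCrossedProduct_mono inf_le_left)
    (idealCrossedProduct_mono inf_le_right))
  let _ : NonUnitalCStarAlgebra B := {}
  have hxJ : x ∈ closure ((x * ·) '' idealCrossedProduct P δ J) :=
    mem_closure_image_mul_of_isClosed_of_mul_mem _ (isClosed_idealCrossedProduct J)
      (fun _ hv u => idealCrossedProduct_mul_mem_left hB hJl hJinv u hv) hx.2
  refine (isClosed_idealCrossedProduct (I ⊓ J)).closure_subset_iff.mpr ?_ hxJ
  rintro _ ⟨y, hy, rfl⟩
  refine mul_mem_idealCrossedProduct hB.covariant (fun g h a b haI hag hbJ hbh => ?_) hx.1 hy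
  exact ⟨PartialDynSys.θ_θ_inv_mul_mem_of_mem_left hIr hIinv b hag haI,
    PartialDynSys.θ_θ_inv_mul_mem_of_mem_right hJl hJinv hag hbJ⟩

/-- For `G`-invariant closed two-sided ideals `I, J` of `A`, inside `A ⋊ G` one has
`(I ⋊ G) ∩ (J ⋊ G) = (I ∩ J) ⋊ G`. -/
theorem idealCrossedProduct_inter
    {G : Type*} [Group G] {A : Type*}
    [NonUnitalNormedRing A] [StarRing A] [CStarRing A]
    [NormedSpace ℂ A] [IsScalarTower ℂ A A] [SMulCommClass ℂ A A]
    [StarModule ℂ A] [CompleteSpace A]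
    (P : PartialDynSys G A)
    {B : Type*} [NonUnitalNormedRing B] [StarRing B] [CStarRing B]
    [NormedSpace ℂ B] [IsScalarTower ℂ B B] [SMulCommClass ℂ B B]
    [StarModule ℂ B] [CompleteSpace B]
    (δ : G → A → B) (hB : IsPartialCrossedProduct P B δ)
    (I J : Submodule ℂ A)
    (hIc : IsClosed ((I : Set A))) (hJc : IsClosed ((J : Set A)))
    (hIl : ∀ a ∈ I, ∀ b : A, b * a ∈ I) (hIr : ∀ a ∈ I, ∀ b : A, a * b ∈ I)
    (hJl : ∀ a ∈ J, ∀ b : A, b * a ∈ J) (hJr : ∀ a ∈ J, ∀ b : A, a * b ∈ J)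
    (hIinv : ∀ g : G, ∀ a ∈ I, a ∈ P.I g⁻¹ → P.θ g a ∈ I)
    (hJinv : ∀ g : G, ∀ a ∈ J, a ∈ P.I g⁻¹ → P.θ g a ∈ J) :
    idealCrossedProduct P δ I ⊓ idealCrossedProduct P δ J =
      idealCrossedProduct P δ (I ⊓ J) :=
  idealCrossedProduct_inter_general P δ hB I J hIr hJl hIinv hJinv
end

section
/- If G and H are supramenable groups, then for all nonempty A ⊆ G and B ⊆ H, the set A × B ⊆ G × H is not paradoxical. -/
open scoped ENNReal

/-!
Choose invariant finitely additive measures `μ` on `G` and `ν` on `H` with `μ A = 1 = ν B`.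
The product measure `S ↦ ∫ ν (S_x) dμ(x)`, with fibres `S_x = {y | (x, y) ∈ S}`, gives `A × B`
measure `1` and is invariant, which rules out a paradoxical decomposition. Rather than integrating
against finitely additive measures, it suffices to use lower Riemann sums of mesh `1 / N`: they
are monotone and invariant, and each translated piece costs an error of at most `1 / N`. Hence
the two halves of an `(n, m)`-piece decomposition have measures at least `1 - n / N` and
`1 - m / N`, while together they fit into `A × B`; this is absurd for `N > n + m`.
-/

open MeasureTheory Set Function

section

variable {α β : Type*}

lemma isSetRing_univ : IsSetRing (univ : Set (Set α)) :=
  ⟨trivial, fun _ _ _ _ => trivial, fun _ _ _ _ => trivial⟩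

noncomputable def IsLeftInvariantFAM.toAddContent {G : Type*} [Group G] {μ : Set G → ℝ≥0∞}
    (hμ : IsLeftInvariantFAM G μ) : AddContent ℝ≥0∞ (univ : Set (Set G)) :=
  isSetRing_univ.addContent_of_union μ hμ.1 fun _ _ => hμ.2.1 _ _

namespace MeasureTheory

variable {m : AddContent ℝ≥0∞ (univ : Set (Set α))}

lemma addContent_mono_univ {s t : Set α} (h : s ⊆ t) : m s ≤ m t :=
  addContent_mono isSetRing_univ.isSetSemiring trivial trivial h

lemma addContent_iUnion_univ {ι : Type*} [Fintype ι] {s : ι → Set α}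
    (hs : Pairwise (Disjoint on s)) : m (⋃ i, s i) = ∑ i, m (s i) :=
  addContent_iUnion (fun _ => trivial) hs trivial

namespace AddContent

variable (m)

lemma eq_sum_inter_fibers {τ : Type*} [Fintype τ] (σ : α → τ) (s : Set α) :
    m s = ∑ t, m (s ∩ σ ⁻¹' {t}) := by
  rw [← addContent_iUnion_univ, ← inter_iUnion, ← preimage_iUnion, iUnion_of_singleton,
    preimage_univ, inter_univ]
  exact fun t t' h => ((disjoint_singleton.2 h).preimage σ).mono inter_subset_right inter_subset_right

lemma apply_inter_eq_indicator_mul {s c : Set α} {x : α} (hc : ∀ y ∈ c, y ∈ s ↔ x ∈ s) :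
    m (s ∩ c) = s.indicator 1 x * m c := by
  by_cases hxs : x ∈ s
  · rw [indicator_of_mem hxs, Pi.one_apply, one_mul, inter_eq_right.2 fun y hy => (hc y hy).2 hxs]
  · rw [indicator_of_notMem hxs, zero_mul, disjoint_iff_inter_eq_empty.1, addContent_empty]
    exact disjoint_left.2 fun y hys hyc => hxs ((hc y hyc).1 hys)

theorem sum_mul_le_sum_mul {ι κ : Type*} [Fintype ι] [Fintype κ]
    (c : ι → ℝ≥0∞) (E : ι → Set α) (d : κ → ℝ≥0∞) (F : κ → Set α)
    (h : ∀ x, ∑ i, c i * (E i).indicator 1 x ≤ ∑ j, d j * (F j).indicator 1 x) :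
    ∑ i, c i * m (E i) ≤ ∑ j, d j * m (F j) := by
  classical
  -- Both sides are constant on the cells `σ ⁻¹' {t}` of the partition generated by the sets.
  let σ : α → (ι → Prop) × (κ → Prop) := fun x => (fun i => x ∈ E i, fun j => x ∈ F j)
  have hcell (t) : ∑ i, c i * m (E i ∩ σ ⁻¹' {t}) ≤ ∑ j, d j * m (F j ∩ σ ⁻¹' {t}) := by
    obtain hempty | ⟨x, hx⟩ := (σ ⁻¹' {t}).eq_empty_or_nonempty
    · simp [hempty]
    have hxt : σ x = t := hx
    have hE (i) : m (E i ∩ σ ⁻¹' {t}) = (E i).indicator 1 x * m (σ ⁻¹' {t}) :=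
      m.apply_inter_eq_indicator_mul fun y (hy : σ y = t) =>
        iff_of_eq (congrFun (congrArg Prod.fst (hy.trans hxt.symm)) i)
    have hF (j) : m (F j ∩ σ ⁻¹' {t}) = (F j).indicator 1 x * m (σ ⁻¹' {t}) :=
      m.apply_inter_eq_indicator_mul fun y (hy : σ y = t) =>
        iff_of_eq (congrFun (congrArg Prod.snd (hy.trans hxt.symm)) j)
    simp only [hE, hF, ← mul_assoc, ← Finset.sum_mul]
    exact mul_le_mul_left (h x) _
  calc ∑ i, c i * m (E i) = ∑ t, ∑ i, c i * m (E i ∩ σ ⁻¹' {t}) := by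
        simp only [m.eq_sum_inter_fibers σ (E _), Finset.mul_sum]
        exact Finset.sum_comm
    _ ≤ ∑ t, ∑ j, d j * m (F j ∩ σ ⁻¹' {t}) := Finset.sum_le_sum fun t _ => hcell t
    _ = ∑ j, d j * m (F j) := by
        simp only [m.eq_sum_inter_fibers σ (F _), Finset.mul_sum]
        exact Finset.sum_comm

end AddContent

end MeasureTheory

/-- `⌊N c⌋` truncated to `N`. -/
noncomputable def levelCount (N : ℕ) (c : ℝ≥0∞) : ℕ :=
  Nat.findGreatest (fun k => (k : ℝ≥0∞) / N ≤ c) N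

lemma levelCount_le (N : ℕ) (c : ℝ≥0∞) : levelCount N c ≤ N :=
  Nat.findGreatest_le N

lemma inv_mul_levelCount_le (N : ℕ) (c : ℝ≥0∞) : (N : ℝ≥0∞)⁻¹ * levelCount N c ≤ c := by
  rw [mul_comm, ← div_eq_mul_inv]
  exact Nat.findGreatest_spec (P := fun k => (k : ℝ≥0∞) / N ≤ c) (Nat.zero_le N) (by simp)

lemma le_inv_mul_levelCount_add {N : ℕ} (hN : N ≠ 0) {c : ℝ≥0∞} (hc : c ≤ 1) :
    c ≤ (N : ℝ≥0∞)⁻¹ * levelCount N c + (N : ℝ≥0∞)⁻¹ := by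
  rw [← mul_add_one, mul_comm, ← div_eq_mul_inv]
  obtain hlt | heq := (levelCount_le N c).lt_or_eq
  · have hnext := Nat.findGreatest_is_greatest (P := fun k => (k : ℝ≥0∞) / N ≤ c)
      (Nat.lt_succ_self _) hlt
    push_cast at hnext
    exact (not_le.1 hnext).le
  · rw [heq]
    calc c ≤ 1 := hc
      _ = (N : ℝ≥0∞) / N :=
          (ENNReal.div_self (by exact_mod_cast hN) (ENNReal.natCast_ne_top N)).symm
      _ ≤ ((N : ℝ≥0∞) + 1) / N := by gcongr; exact le_self_add

lemma sum_indicator_levelSet (N : ℕ) (f : α → ℝ≥0∞) (x : α) :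
    ∑ k : Fin N, (N : ℝ≥0∞)⁻¹ * {y | k < levelCount N (f y)}.indicator 1 x =
      (N : ℝ≥0∞)⁻¹ * levelCount N (f x) := by
  classical
  simp only [indicator_apply, mem_ofPred_eq, Pi.one_apply, mul_ite, mul_one, mul_zero,
    Finset.sum_ite, Finset.sum_const_zero, add_zero, Finset.sum_const, nsmul_eq_mul,
    Fin.card_filter_val_lt, min_eq_right (levelCount_le N _)]
  ring

section lowerSum

variable (m : AddContent ℝ≥0∞ (univ : Set (Set α)))

/-- A lower Riemann sum for `∫ f dm` with mesh `1 / N`. -/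
noncomputable def lowerSum (N : ℕ) (f : α → ℝ≥0∞) : ℝ≥0∞ :=
  ∑ k : Fin N, (N : ℝ≥0∞)⁻¹ * m {x | k < levelCount N (f x)}

lemma sum_lowerSum_le {ι : Type*} [Fintype ι] (N : ℕ) (f : ι → α → ℝ≥0∞) (A : Set α)
    (hf : ∀ x, ∑ i, f i x ≤ A.indicator 1 x) :
    ∑ i, lowerSum m N (f i) ≤ m A := by
  have hsimple := m.sum_mul_le_sum_mul (fun _ : ι × Fin N => (N : ℝ≥0∞)⁻¹)
    (fun p => {x | p.2 < levelCount N (f p.1 x)}) (fun _ : Unit => 1) (fun _ => A) fun x => by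
      simpa [Fintype.sum_prod_type, sum_indicator_levelSet] using
        (Finset.sum_le_sum fun i _ => inv_mul_levelCount_le N (f i x)).trans (hf x)
  simpa [lowerSum, Fintype.sum_prod_type] using hsimple

lemma le_sum_lowerSum_add {ι : Type*} [Fintype ι] {N : ℕ} (hN : N ≠ 0) (f : ι → α → ℝ≥0∞)
    (A : Set α) (D : ι → Set α) (hfD : ∀ i x, f i x ≤ (D i).indicator 1 x)
    (hfA : ∀ x ∈ A, 1 ≤ ∑ i, f i x) :
    m A ≤ ∑ i, lowerSum m N (f i) + (N : ℝ≥0∞)⁻¹ * ∑ i, m (D i) := by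
  have hstep (i x) : f i x ≤ (N : ℝ≥0∞)⁻¹ * levelCount N (f i x) +
      (N : ℝ≥0∞)⁻¹ * (D i).indicator 1 x := by
    by_cases hx : x ∈ D i
    · simpa [hx] using le_inv_mul_levelCount_add hN (by simpa [hx] using hfD i x)
    · have hzero : f i x = 0 := by simpa [hx] using hfD i x
      simp [hzero]
  have hsimple := m.sum_mul_le_sum_mul (fun _ : Unit => 1) (fun _ => A)
    (fun _ : ι × Fin N ⊕ ι => (N : ℝ≥0∞)⁻¹)
    (Sum.elim (fun p => {x | p.2 < levelCount N (f p.1 x)}) D) fun x => by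
      by_cases hx : x ∈ A
      · simpa [Fintype.sum_prod_type, sum_indicator_levelSet, hx, Finset.sum_add_distrib] using
          (hfA x hx).trans (Finset.sum_le_sum fun i _ => hstep i x)
      · simp [hx]
  simpa [lowerSum, Fintype.sum_prod_type, Finset.mul_sum] using hsimple

end lowerSum

lemma lowerSum_comp_mul_left {G : Type*} [Group G] (m : AddContent ℝ≥0∞ (univ : Set (Set G)))
    (hm : ∀ g E, m ((g * ·) '' E) = m E) (N : ℕ) (f : G → ℝ≥0∞) (g : G) :
    lowerSum m N (fun x => f (g⁻¹ * x)) = lowerSum m N f := by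
  refine Finset.sum_congr rfl fun k _ => ?_
  rw [← hm g {x | k < levelCount N (f x)}, image_mul_left]
  rfl

noncomputable def fiberMeasure (n : AddContent ℝ≥0∞ (univ : Set (Set β))) (S : Set (α × β))
    (x : α) : ℝ≥0∞ :=
  n (Prod.mk x ⁻¹' S)

section fiberMeasure

variable (n : AddContent ℝ≥0∞ (univ : Set (Set β)))

lemma fiberMeasure_mono {S T : Set (α × β)} (h : S ⊆ T) (x : α) :
    fiberMeasure n S x ≤ fiberMeasure n T x :=
  addContent_mono_univ (preimage_mono h)

lemma fiberMeasure_prod (A : Set α) (B : Set β) (x : α) :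
    fiberMeasure n (A ×ˢ B) x = A.indicator (fun _ => n B) x := by
  by_cases hx : x ∈ A
  · simp [fiberMeasure, hx, mk_preimage_prod_right]
  · simp [fiberMeasure, hx, mk_preimage_prod_right_eq_empty]

lemma fiberMeasure_le_indicator {A : Set α} {B : Set β} (hB : n B = 1) {S : Set (α × β)}
    (hS : S ⊆ A ×ˢ B) (x : α) : fiberMeasure n S x ≤ A.indicator 1 x :=
  (fiberMeasure_mono n hS x).trans_eq (by rw [fiberMeasure_prod, hB]; rfl)

lemma sum_fiberMeasure {ι : Type*} [Fintype ι] {S : ι → Set (α × β)}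
    (hS : Pairwise (Disjoint on S)) (x : α) :
    ∑ i, fiberMeasure n (S i) x = fiberMeasure n (⋃ i, S i) x := by
  rw [fiberMeasure, preimage_iUnion, addContent_iUnion_univ fun i j h => (hS h).preimage _]
  rfl

lemma fiberMeasure_image_mul_left [Group α] [Group β] (hn : ∀ h E, n ((h * ·) '' E) = n E)
    (p : α × β) (S : Set (α × β)) (x : α) :
    fiberMeasure n ((p * ·) '' S) x = fiberMeasure n S (p.1⁻¹ * x) := by
  rw [fiberMeasure, fiberMeasure, ← hn p.2 (Prod.mk (p.1⁻¹ * x) ⁻¹' S), image_mul_left,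
    image_mul_left]
  rfl

end fiberMeasure

lemma sum_lowerSum_fiberMeasure_le (m : AddContent ℝ≥0∞ (univ : Set (Set α)))
    (n : AddContent ℝ≥0∞ (univ : Set (Set β))) {A : Set α} {B : Set β} (hB : n B = 1)
    {ι : Type*} [Fintype ι] (N : ℕ) {R : ι → Set (α × β)} (hR : Pairwise (Disjoint on R))
    (hRAB : ⋃ i, R i ⊆ A ×ˢ B) :
    ∑ i, lowerSum m N (fiberMeasure n (R i)) ≤ m A :=
  sum_lowerSum_le m N _ A fun x => by
    rw [sum_fiberMeasure n hR]
    exact fiberMeasure_le_indicator n hB hRAB x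

lemma one_le_sum_lowerSum_fiberMeasure_add {G H : Type*} [Group G] [Group H]
    (μ : AddContent ℝ≥0∞ (univ : Set (Set G))) (ν : AddContent ℝ≥0∞ (univ : Set (Set H)))
    (hμ : ∀ g E, μ ((g * ·) '' E) = μ E) (hν : ∀ h E, ν ((h * ·) '' E) = ν E)
    {A : Set G} {B : Set H} (hA : μ A = 1) (hB : ν B = 1)
    {ι : Type*} [Fintype ι] {N : ℕ} (hN : N ≠ 0) (P : ι → Set (G × H)) (s : ι → G × H)
    (hcover : ⋃ i, (s i * ·) '' P i = A ×ˢ B)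
    (hdisj : Pairwise (Disjoint on fun i => (s i * ·) '' P i)) :
    1 ≤ ∑ i, lowerSum μ N (fiberMeasure ν (P i)) + (N : ℝ≥0∞)⁻¹ * Fintype.card ι := by
  have key := le_sum_lowerSum_add μ hN (fun i => fiberMeasure ν ((s i * ·) '' P i)) A
    (fun _ => A) (fun i => fiberMeasure_le_indicator ν hB
      (hcover ▸ subset_iUnion (fun i => (s i * ·) '' P i) i))
    fun x hx => by rw [sum_fiberMeasure ν hdisj, hcover, fiberMeasure_prod, indicator_of_mem hx, hB]
  have htranslate (i) : fiberMeasure ν ((s i * ·) '' P i) =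
      fun x => fiberMeasure ν (P i) ((s i).1⁻¹ * x) :=
    funext (fiberMeasure_image_mul_left ν hν (s i) (P i))
  simp only [htranslate, lowerSum_comp_mul_left μ hμ, hA, Finset.sum_const, Finset.card_univ,
    nsmul_eq_mul, mul_one] at key
  simpa [mul_comm] using key

lemma pairwise_disjoint_on_sumElim {ι κ : Type*} {s : ι → Set α} {t : κ → Set α}
    (hs : Pairwise (Disjoint on s)) (ht : Pairwise (Disjoint on t))
    (hst : Disjoint (⋃ i, s i) (⋃ j, t j)) : Pairwise (Disjoint on Sum.elim s t) := by
  rintro (i | i) (j | j) hij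
  · exact hs (Sum.inl_injective.ne_iff.1 hij)
  · exact hst.mono (subset_iUnion s i) (subset_iUnion t j)
  · exact hst.symm.mono (subset_iUnion t i) (subset_iUnion s j)
  · exact ht (Sum.inr_injective.ne_iff.1 hij)

lemma ENNReal.one_le_add_of_add_le_one {a b x y : ℝ≥0∞} (hab : a + b ≤ 1) (ha : 1 ≤ a + x)
    (hb : 1 ≤ b + y) : 1 ≤ x + y := by
  refine (ENNReal.add_le_add_iff_left ENNReal.one_ne_top).1 ?_
  calc 1 + 1 ≤ (a + x) + (b + y) := add_le_add ha hb
    _ = (a + b) + (x + y) := add_add_add_comm _ _ _ _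
    _ ≤ 1 + (x + y) := by gcongr

end

/-- If `G` and `H` are supramenable, then `A × B` is never a paradoxical subset of
`G × H`, for nonempty `A ⊆ G`, `B ⊆ H`. -/
theorem prod_not_paradoxical_of_supramenable
    {G H : Type*} [Group G] [Group H]
    (hG : Supramenable G) (hH : Supramenable H)
    (A : Set G) (B : Set H) (hA : A.Nonempty) (hB : B.Nonempty) :
    ¬ Paradoxical (A ×ˢ B) := by
  rintro ⟨-, n, m, P, Q, s, t, hPAB, hQAB, hPdisj, hQdisj, hPQ, hPcover, hPtrans, hQcover, hQtrans⟩
  obtain ⟨μ, hμ, hμA⟩ := hG A hA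
  obtain ⟨ν, hν, hνB⟩ := hH B hB
  set N := n + m + 1
  have hupper := sum_lowerSum_fiberMeasure_le hμ.toAddContent hν.toAddContent hνB N
    (pairwise_disjoint_on_sumElim (fun i j => hPdisj i j) (fun i j => hQdisj i j) hPQ)
    (iUnion_subset (Sum.forall.2 ⟨hPAB, hQAB⟩))
  rw [Fintype.sum_sum_type] at hupper
  have hlowerP := one_le_sum_lowerSum_fiberMeasure_add hμ.toAddContent hν.toAddContent hμ.2.2
    hν.2.2 hμA hνB (n + m).succ_ne_zero P s hPcover fun i j => hPtrans i j
  have hlowerQ := one_le_sum_lowerSum_fiberMeasure_add hμ.toAddContent hν.toAddContent hμ.2.2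
    hν.2.2 hμA hνB (n + m).succ_ne_zero Q t hQcover fun i j => hQtrans i j
  simp only [Fintype.card_fin] at hlowerP hlowerQ
  have hmesh : (N : ℝ≥0∞)⁻¹ * n + (N : ℝ≥0∞)⁻¹ * m < 1 := by
    rw [← mul_add, mul_comm, ← div_eq_mul_inv, ENNReal.div_lt_iff (by simp) (by simp), one_mul]
    exact_mod_cast (by omega : n + m < N)
  exact hmesh.not_ge (ENNReal.one_le_add_of_add_le_one (hupper.trans_eq hμA) hlowerP hlowerQ)
end
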